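/- arXiv:1708.05694 — 13 statements merged into one kernel-verified Lean document; each statement's English description precedes it below -/
import Mathlib

section
/- Let K be a constant real n×m matrix, S a constant real m'×m matrix, T a constant real n×n' matrix, and K' a constant real n'×m' matrix such that K = T K' S. If the smooth function φ : ℝ³ → (m×n real matrices), φ = φ(x,y,t), satisfies the pKP_K equation 4 φ_{xt} − φ_{xxxx} − 3 φ_{yy} − 6 (φ_x K φ_x)_x + 6 (φ_x K φ_y − φ_y K φ_x) = 0, then the m'×n' matrix valued function φ' = S φ T satisfies the pKP_{K'} equation 4 φ'_{xt} − φ'_{xxxx} − 3 φ'_{yy} − 6 (φ'_x K' φ'_x)_x + 6 (φ'_x K' φ'_y − φ'_y K' φ'_x) = 0. -/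
open Matrix

/-- Partial derivative with respect to the first variable `x` of a matrix-valued
function of `(x, y, t)`, taken entrywise. -/
noncomputable def Dx {m n : ℕ} (φ : ℝ → ℝ → ℝ → Matrix (Fin m) (Fin n) ℝ) :
    ℝ → ℝ → ℝ → Matrix (Fin m) (Fin n) ℝ :=
  fun x y t => Matrix.of fun i j => deriv (fun s => φ s y t i j) x

/-- Partial derivative with respect to the second variable `y`. -/
noncomputable def Dy {m n : ℕ} (φ : ℝ → ℝ → ℝ → Matrix (Fin m) (Fin n) ℝ) :
    ℝ → ℝ → ℝ → Matrix (Fin m) (Fin n) ℝ :=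
  fun x y t => Matrix.of fun i j => deriv (fun s => φ x s t i j) y

/-- Partial derivative with respect to the third variable `t`. -/
noncomputable def Dt {m n : ℕ} (φ : ℝ → ℝ → ℝ → Matrix (Fin m) (Fin n) ℝ) :
    ℝ → ℝ → ℝ → Matrix (Fin m) (Fin n) ℝ :=
  fun x y t => Matrix.of fun i j => deriv (fun s => φ x y s i j) t

/-- Smoothness (entrywise `C^∞`) of a matrix-valued function on ℝ³. -/
def SmoothMat {m n : ℕ} (φ : ℝ → ℝ → ℝ → Matrix (Fin m) (Fin n) ℝ) : Prop :=
  ∀ i j, ContDiff ℝ (⊤ : ℕ∞) fun pt : ℝ × ℝ × ℝ => φ pt.1 pt.2.1 pt.2.2 i j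

section helpers
variable {m n : ℕ} {φ : ℝ → ℝ → ℝ → Matrix (Fin m) (Fin n) ℝ}

lemma diffx (h : SmoothMat φ) (y t : ℝ) (i : Fin m) (j : Fin n) (x : ℝ) :
    DifferentiableAt ℝ (fun s => φ s y t i j) x := by
  have : (fun s => φ s y t i j) =
      (fun pt : ℝ × ℝ × ℝ => φ pt.1 pt.2.1 pt.2.2 i j) ∘ (fun s => (s, y, t)) := rfl
  rw [this]
  exact (((h i j).comp (contDiff_id.prodMk contDiff_const)).differentiable (by simp)).differentiableAt

lemma diffy (h : SmoothMat φ) (x t : ℝ) (i : Fin m) (j : Fin n) (y : ℝ) :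
    DifferentiableAt ℝ (fun s => φ x s t i j) y := by
  have : (fun s => φ x s t i j) =
      (fun pt : ℝ × ℝ × ℝ => φ pt.1 pt.2.1 pt.2.2 i j) ∘ (fun s => (x, s, t)) := rfl
  rw [this]
  exact (((h i j).comp (contDiff_const.prodMk (contDiff_id.prodMk contDiff_const))).differentiable
    (by simp)).differentiableAt

lemma difft (h : SmoothMat φ) (x y : ℝ) (i : Fin m) (j : Fin n) (t : ℝ) :
    DifferentiableAt ℝ (fun s => φ x y s i j) t := by
  have : (fun s => φ x y s i j) =
      (fun pt : ℝ × ℝ × ℝ => φ pt.1 pt.2.1 pt.2.2 i j) ∘ (fun s => (x, y, s)) := rfl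
  rw [this]
  exact (((h i j).comp (contDiff_const.prodMk (contDiff_const.prodMk contDiff_id))).differentiable
    (by simp)).differentiableAt

lemma hasDerivAt_x (h : SmoothMat φ) (x y t : ℝ) (i : Fin m) (j : Fin n) :
    HasDerivAt (fun s => φ s y t i j)
      (fderiv ℝ (fun pt : ℝ × ℝ × ℝ => φ pt.1 pt.2.1 pt.2.2 i j) (x, y, t)
        ((1:ℝ), (0:ℝ), (0:ℝ))) x := by
  have hd := ((h i j).differentiable (by simp)) (x, y, t)
  exact (hd.hasFDerivAt).comp_hasDerivAt x
    ((hasDerivAt_id x).prodMk ((hasDerivAt_const x y).prodMk (hasDerivAt_const x t)))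

lemma hasDerivAt_y (h : SmoothMat φ) (x y t : ℝ) (i : Fin m) (j : Fin n) :
    HasDerivAt (fun s => φ x s t i j)
      (fderiv ℝ (fun pt : ℝ × ℝ × ℝ => φ pt.1 pt.2.1 pt.2.2 i j) (x, y, t)
        ((0:ℝ), (1:ℝ), (0:ℝ))) y := by
  have hd := ((h i j).differentiable (by simp)) (x, y, t)
  exact (hd.hasFDerivAt).comp_hasDerivAt y
    ((hasDerivAt_const y x).prodMk ((hasDerivAt_id y).prodMk (hasDerivAt_const y t)))

lemma hasDerivAt_t (h : SmoothMat φ) (x y t : ℝ) (i : Fin m) (j : Fin n) :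
    HasDerivAt (fun s => φ x y s i j)
      (fderiv ℝ (fun pt : ℝ × ℝ × ℝ => φ pt.1 pt.2.1 pt.2.2 i j) (x, y, t)
        ((0:ℝ), (0:ℝ), (1:ℝ))) t := by
  have hd := ((h i j).differentiable (by simp)) (x, y, t)
  exact (hd.hasFDerivAt).comp_hasDerivAt t
    ((hasDerivAt_const t x).prodMk ((hasDerivAt_const t y).prodMk (hasDerivAt_id t)))

lemma smooth_Dx (h : SmoothMat φ) : SmoothMat (Dx φ) := by
  intro i j
  have : (fun pt : ℝ × ℝ × ℝ => Dx φ pt.1 pt.2.1 pt.2.2 i j) =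
      fun pt : ℝ × ℝ × ℝ =>
        (fderiv ℝ (fun q : ℝ × ℝ × ℝ => φ q.1 q.2.1 q.2.2 i j) pt) ((1:ℝ), (0:ℝ), (0:ℝ)) := by
    funext pt
    exact (hasDerivAt_x h pt.1 pt.2.1 pt.2.2 i j).deriv
  rw [this]
  exact ((h i j).fderiv_right (by simp)).clm_apply contDiff_const

lemma smooth_Dy (h : SmoothMat φ) : SmoothMat (Dy φ) := by
  intro i j
  have : (fun pt : ℝ × ℝ × ℝ => Dy φ pt.1 pt.2.1 pt.2.2 i j) =
      fun pt : ℝ × ℝ × ℝ =>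
        (fderiv ℝ (fun q : ℝ × ℝ × ℝ => φ q.1 q.2.1 q.2.2 i j) pt) ((0:ℝ), (1:ℝ), (0:ℝ)) := by
    funext pt
    exact (hasDerivAt_y h pt.1 pt.2.1 pt.2.2 i j).deriv
  rw [this]
  exact ((h i j).fderiv_right (by simp)).clm_apply contDiff_const

lemma smooth_Dt (h : SmoothMat φ) : SmoothMat (Dt φ) := by
  intro i j
  have : (fun pt : ℝ × ℝ × ℝ => Dt φ pt.1 pt.2.1 pt.2.2 i j) =
      fun pt : ℝ × ℝ × ℝ =>
        (fderiv ℝ (fun q : ℝ × ℝ × ℝ => φ q.1 q.2.1 q.2.2 i j) pt) ((0:ℝ), (0:ℝ), (1:ℝ)) := by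
    funext pt
    exact (hasDerivAt_t h pt.1 pt.2.1 pt.2.2 i j).deriv
  rw [this]
  exact ((h i j).fderiv_right (by simp)).clm_apply contDiff_const

lemma smooth_mul3 {p q : ℕ} {ψ : ℝ → ℝ → ℝ → Matrix (Fin m) (Fin p) ℝ}
    {χ : ℝ → ℝ → ℝ → Matrix (Fin q) (Fin n) ℝ} (A : Matrix (Fin p) (Fin q) ℝ)
    (h1 : SmoothMat ψ) (h2 : SmoothMat χ) :
    SmoothMat (fun x y t => ψ x y t * A * χ x y t) := by
  intro i j
  simp only [Matrix.mul_apply]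
  apply ContDiff.sum
  intro l _
  exact (ContDiff.sum fun k _ => ((h1 i k).mul contDiff_const)).mul (h2 l j)

lemma conj_Dx {p q : ℕ} (S : Matrix (Fin p) (Fin m) ℝ) (T : Matrix (Fin n) (Fin q) ℝ)
    (h : SmoothMat φ) :
    Dx (fun x y t => S * φ x y t * T) = fun x y t => S * Dx φ x y t * T := by
  funext x y t
  ext i j
  simp only [Dx, Matrix.of_apply, Matrix.mul_apply]
  rw [deriv_fun_sum (fun l _ => ((DifferentiableAt.fun_sum
    (fun k _ => ((diffx h y t k l x).const_mul (S i k)))).mul_const (T l j)))]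
  refine Finset.sum_congr rfl fun l _ => ?_
  rw [deriv_mul_const (DifferentiableAt.fun_sum
    (fun k _ => ((diffx h y t k l x).const_mul (S i k)))),
    deriv_fun_sum (fun k _ => ((diffx h y t k l x).const_mul (S i k)))]
  refine congrArg (· * T l j) (Finset.sum_congr rfl fun k _ => ?_)
  rw [deriv_const_mul _ (diffx h y t k l x)]
lemma conj_Dy {p q : ℕ} (S : Matrix (Fin p) (Fin m) ℝ) (T : Matrix (Fin n) (Fin q) ℝ)
    (h : SmoothMat φ) :
    Dy (fun x y t => S * φ x y t * T) = fun x y t => S * Dy φ x y t * T := by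
  funext x y t
  ext i j
  simp only [Dy, Matrix.of_apply, Matrix.mul_apply]
  rw [deriv_fun_sum (fun l _ => ((DifferentiableAt.fun_sum
    (fun k _ => ((diffy h x t k l y).const_mul (S i k)))).mul_const (T l j)))]
  refine Finset.sum_congr rfl fun l _ => ?_
  rw [deriv_mul_const (DifferentiableAt.fun_sum
    (fun k _ => ((diffy h x t k l y).const_mul (S i k)))),
    deriv_fun_sum (fun k _ => ((diffy h x t k l y).const_mul (S i k)))]
  refine congrArg (· * T l j) (Finset.sum_congr rfl fun k _ => ?_)
  rw [deriv_const_mul _ (diffy h x t k l y)]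
lemma conj_Dt {p q : ℕ} (S : Matrix (Fin p) (Fin m) ℝ) (T : Matrix (Fin n) (Fin q) ℝ)
    (h : SmoothMat φ) :
    Dt (fun x y t => S * φ x y t * T) = fun x y t => S * Dt φ x y t * T := by
  funext x y t
  ext i j
  simp only [Dt, Matrix.of_apply, Matrix.mul_apply]
  rw [deriv_fun_sum (fun l _ => ((DifferentiableAt.fun_sum
    (fun k _ => ((difft h x y k l t).const_mul (S i k)))).mul_const (T l j)))]
  refine Finset.sum_congr rfl fun l _ => ?_
  rw [deriv_mul_const (DifferentiableAt.fun_sum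
    (fun k _ => ((difft h x y k l t).const_mul (S i k)))),
    deriv_fun_sum (fun k _ => ((difft h x y k l t).const_mul (S i k)))]
  refine congrArg (· * T l j) (Finset.sum_congr rfl fun k _ => ?_)
  rw [deriv_const_mul _ (difft h x y k l t)]
end helpers

/-- The pKP_K equation:
`4 φ_{xt} − φ_{xxxx} − 3 φ_{yy} − 6 (φ_x K φ_x)_x + 6 (φ_x K φ_y − φ_y K φ_x) = 0`. -/
def pKP {m n : ℕ} (K : Matrix (Fin n) (Fin m) ℝ)
    (φ : ℝ → ℝ → ℝ → Matrix (Fin m) (Fin n) ℝ) : Prop :=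
  ∀ x y t : ℝ,
    (4 : ℝ) • Dx (Dt φ) x y t - Dx (Dx (Dx (Dx φ))) x y t - (3 : ℝ) • Dy (Dy φ) x y t
      - (6 : ℝ) • Dx (fun x y t => Dx φ x y t * K * Dx φ x y t) x y t
      + (6 : ℝ) • (Dx φ x y t * K * Dy φ x y t - Dy φ x y t * K * Dx φ x y t) = 0

/-- If `K = T K' S` and `φ` solves pKP_K, then `φ' = S φ T` solves pKP_{K'}. -/
theorem stmt_0 {m n m' n' : ℕ}
    (K : Matrix (Fin n) (Fin m) ℝ) (S : Matrix (Fin m') (Fin m) ℝ)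
    (T : Matrix (Fin n) (Fin n') ℝ) (K' : Matrix (Fin n') (Fin m') ℝ)
    (hK : K = T * K' * S)
    (φ : ℝ → ℝ → ℝ → Matrix (Fin m) (Fin n) ℝ)
    (hsmooth : SmoothMat φ) (hφ : pKP K φ) :
    pKP K' (fun x y t => S * φ x y t * T) := by
  intro x y t
  have hx1 : Dx (fun x y t => S * φ x y t * T) = fun x y t => S * Dx φ x y t * T :=
    conj_Dx S T hsmooth
  have hy1 : Dy (fun x y t => S * φ x y t * T) = fun x y t => S * Dy φ x y t * T :=
    conj_Dy S T hsmooth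
  have ht1 : Dt (fun x y t => S * φ x y t * T) = fun x y t => S * Dt φ x y t * T :=
    conj_Dt S T hsmooth
  have hxt : Dx (Dt fun x y t => S * φ x y t * T) = fun x y t => S * Dx (Dt φ) x y t * T := by
    rw [ht1, conj_Dx S T (smooth_Dt hsmooth)]
  have hx2 : Dx (Dx fun x y t => S * φ x y t * T) = fun x y t => S * Dx (Dx φ) x y t * T := by
    rw [hx1, conj_Dx S T (smooth_Dx hsmooth)]
  have hx3 : Dx (Dx (Dx fun x y t => S * φ x y t * T)) =
      fun x y t => S * Dx (Dx (Dx φ)) x y t * T := by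
    rw [hx2, conj_Dx S T (smooth_Dx (smooth_Dx hsmooth))]
  have hx4 : Dx (Dx (Dx (Dx fun x y t => S * φ x y t * T))) =
      fun x y t => S * Dx (Dx (Dx (Dx φ))) x y t * T := by
    rw [hx3, conj_Dx S T (smooth_Dx (smooth_Dx (smooth_Dx hsmooth)))]
  have hy2 : Dy (Dy fun x y t => S * φ x y t * T) = fun x y t => S * Dy (Dy φ) x y t * T := by
    rw [hy1, conj_Dy S T (smooth_Dy hsmooth)]
  have hprod : (fun x y t => Dx (fun x y t => S * φ x y t * T) x y t * K' *
      Dx (fun x y t => S * φ x y t * T) x y t) =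
      fun x y t => S * (Dx φ x y t * K * Dx φ x y t) * T := by
    funext a b c
    rw [hx1]
    simp only [hK, Matrix.mul_assoc]
  have hprodD : Dx (fun x y t => Dx (fun x y t => S * φ x y t * T) x y t * K' *
      Dx (fun x y t => S * φ x y t * T) x y t) =
      fun x y t => S * Dx (fun x y t => Dx φ x y t * K * Dx φ x y t) x y t * T := by
    rw [hprod, conj_Dx S T (smooth_mul3 K (smooth_Dx hsmooth) (smooth_Dx hsmooth))]
  rw [hxt, hx4, hy2, hprodD, hx1, hy1]
  have key := hφ x y t
  have : S * ((4 : ℝ) • Dx (Dt φ) x y t - Dx (Dx (Dx (Dx φ))) x y t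
      - (3 : ℝ) • Dy (Dy φ) x y t
      - (6 : ℝ) • Dx (fun x y t => Dx φ x y t * K * Dx φ x y t) x y t
      + (6 : ℝ) • (Dx φ x y t * K * Dy φ x y t - Dy φ x y t * K * Dx φ x y t)) * T = 0 := by
    rw [key]; simp
  rw [← this]
  simp only [hK, Matrix.mul_add, Matrix.add_mul, Matrix.mul_sub, Matrix.sub_mul,
    Matrix.mul_smul, Matrix.smul_mul, Matrix.mul_assoc]
end

section
/- (Binary Darboux transformation for pKP_K.) Let K be a constant real n×m matrix and φ₀ : ℝ³ → (m×n real matrices) a smooth solution of the pKP_K equation. Let θ : ℝ³ → (m×N real matrices) and χ : ℝ³ → (N×n real matrices) be smooth solutions of the linear systems θ_y = θ_{xx} + 2 φ_{0,x} K θ, θ_t = θ_{xxx} + 3 φ_{0,x} K θ_x + (3/2)(φ_{0,y} + φ_{0,xx}) K θ, and χ_y = − χ_{xx} − 2 χ K φ_{0,x}, χ_t = χ_{xxx} + 3 χ_x K φ_{0,x} − (3/2) χ K (φ_{0,y} − φ_{0,xx}). Let Ω : ℝ³ → (N×N real matrices) be a smooth solution of Ω_x = − χ K θ, Ω_y = −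 χ K θ_x + χ_x K θ, Ω_t = − χ K θ_{xx} + χ_x K θ_x − χ_{xx} K θ − 3 χ K φ_{0,x} K θ, and assume Ω(x,y,t) is invertible at every point. Then φ := φ₀ − θ Ω⁻¹ χ is a solution of the pKP_K equation. -/
open Matrix

namespace KPaux

variable {p q r : ℕ}

/-- entry function on ℝ³ -/
abbrev ent (f : ℝ → ℝ → ℝ → Matrix (Fin p) (Fin q) ℝ) (i : Fin p) (j : Fin q) :
    ℝ × ℝ × ℝ → ℝ := fun pt => f pt.1 pt.2.1 pt.2.2 i j

theorem lineX {f : ℝ → ℝ → ℝ → Matrix (Fin p) (Fin q) ℝ} (hf : SmoothMat f)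
    (y t : ℝ) (i : Fin p) (j : Fin q) : ContDiff ℝ (⊤ : ℕ∞) fun s : ℝ => f s y t i j :=
  by
  have h : ContDiff ℝ (⊤ : ℕ∞) (fun s : ℝ => (s, (y, t))) := contDiff_id.prodMk contDiff_const
  exact (hf i j).comp h

theorem lineY {f : ℝ → ℝ → ℝ → Matrix (Fin p) (Fin q) ℝ} (hf : SmoothMat f)
    (x t : ℝ) (i : Fin p) (j : Fin q) : ContDiff ℝ (⊤ : ℕ∞) fun s : ℝ => f x s t i j :=
  by
  have h : ContDiff ℝ (⊤ : ℕ∞) (fun s : ℝ => (x, (s, t))) := contDiff_const.prodMk (contDiff_id.prodMk contDiff_const)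
  exact (hf i j).comp h

theorem lineT {f : ℝ → ℝ → ℝ → Matrix (Fin p) (Fin q) ℝ} (hf : SmoothMat f)
    (x y : ℝ) (i : Fin p) (j : Fin q) : ContDiff ℝ (⊤ : ℕ∞) fun s : ℝ => f x y s i j :=
  by
  have h : ContDiff ℝ (⊤ : ℕ∞) (fun s : ℝ => (x, (y, s))) := contDiff_const.prodMk (contDiff_const.prodMk contDiff_id)
  exact (hf i j).comp h

theorem diffX {f : ℝ → ℝ → ℝ → Matrix (Fin p) (Fin q) ℝ} (hf : SmoothMat f)
    {x : ℝ} (y t : ℝ) (i : Fin p) (j : Fin q) :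
    DifferentiableAt ℝ (fun s : ℝ => f s y t i j) x :=
  ((lineX hf y t i j).differentiable (by simp)).differentiableAt

theorem diffY {f : ℝ → ℝ → ℝ → Matrix (Fin p) (Fin q) ℝ} (hf : SmoothMat f)
    (x : ℝ) {y : ℝ} (t : ℝ) (i : Fin p) (j : Fin q) :
    DifferentiableAt ℝ (fun s : ℝ => f x s t i j) y :=
  ((lineY hf x t i j).differentiable (by simp)).differentiableAt

theorem diffT {f : ℝ → ℝ → ℝ → Matrix (Fin p) (Fin q) ℝ} (hf : SmoothMat f)
    (x y : ℝ) {t : ℝ} (i : Fin p) (j : Fin q) :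
    DifferentiableAt ℝ (fun s : ℝ => f x y s i j) t :=
  ((lineT hf x y i j).differentiable (by simp)).differentiableAt

/-- generic 1-variable matrix Leibniz rule -/
theorem matDeriv_mul {f : ℝ → Matrix (Fin p) (Fin q) ℝ} {g : ℝ → Matrix (Fin q) (Fin r) ℝ}
    {x : ℝ} (hf : ∀ i j, DifferentiableAt ℝ (fun s => f s i j) x)
    (hg : ∀ i j, DifferentiableAt ℝ (fun s => g s i j) x) :
    (Matrix.of fun i j => deriv (fun s => (f s * g s) i j) x)
      = (Matrix.of fun i j => deriv (fun s => f s i j) x) * g x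
        + f x * (Matrix.of fun i j => deriv (fun s => g s i j) x) := by
  ext i j
  have h1 : (fun s => (f s * g s) i j) = fun s => ∑ k, f s i k * g s k j := by
    funext s; simp [Matrix.mul_apply]
  rw [Matrix.add_apply, Matrix.of_apply, h1, deriv_fun_sum (A := fun k s => f s i k * g s k j)
      (fun k _ => ((hf i k).mul (hg k j)))]
  simp only [Matrix.mul_apply, Matrix.of_apply]
  rw [← Finset.sum_add_distrib]
  refine Finset.sum_congr rfl fun k _ => ?_
  rw [deriv_fun_mul (hf i k) (hg k j)]

end KPaux

namespace KPaux
variable {p q r : ℕ}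

theorem matDeriv_add {f g : ℝ → Matrix (Fin p) (Fin q) ℝ} {x : ℝ}
    (hf : ∀ i j, DifferentiableAt ℝ (fun s => f s i j) x)
    (hg : ∀ i j, DifferentiableAt ℝ (fun s => g s i j) x) :
    (Matrix.of fun i j => deriv (fun s => (f s + g s) i j) x)
      = (Matrix.of fun i j => deriv (fun s => f s i j) x)
        + (Matrix.of fun i j => deriv (fun s => g s i j) x) := by
  ext i j
  simp only [Matrix.add_apply, Matrix.of_apply]
  exact deriv_add (hf i j) (hg i j)

theorem matDeriv_sub {f g : ℝ → Matrix (Fin p) (Fin q) ℝ} {x : ℝ}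
    (hf : ∀ i j, DifferentiableAt ℝ (fun s => f s i j) x)
    (hg : ∀ i j, DifferentiableAt ℝ (fun s => g s i j) x) :
    (Matrix.of fun i j => deriv (fun s => (f s - g s) i j) x)
      = (Matrix.of fun i j => deriv (fun s => f s i j) x)
        - (Matrix.of fun i j => deriv (fun s => g s i j) x) := by
  ext i j
  simp only [Matrix.sub_apply, Matrix.of_apply]
  exact deriv_sub (hf i j) (hg i j)

theorem matDeriv_smul (c : ℝ) {f : ℝ → Matrix (Fin p) (Fin q) ℝ} {x : ℝ}
    (hf : ∀ i j, DifferentiableAt ℝ (fun s => f s i j) x) :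
    (Matrix.of fun i j => deriv (fun s => (c • f s) i j) x)
      = c • (Matrix.of fun i j => deriv (fun s => f s i j) x) := by
  ext i j
  simp only [Matrix.smul_apply, Matrix.of_apply, smul_eq_mul]
  rw [show (fun s => c * f s i j) = fun s => c * (fun s' => f s' i j) s from rfl,
    deriv_const_mul c (hf i j)]

theorem matDeriv_neg {f : ℝ → Matrix (Fin p) (Fin q) ℝ} {x : ℝ} :
    (Matrix.of fun i j => deriv (fun s => (- f s) i j) x)
      = - (Matrix.of fun i j => deriv (fun s => f s i j) x) := by
  ext i j
  simp only [Matrix.neg_apply, Matrix.of_apply]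
  exact deriv.neg

theorem matDeriv_const {C : Matrix (Fin p) (Fin q) ℝ} {x : ℝ} :
    (Matrix.of fun (i : Fin p) (j : Fin q) => deriv (fun _ : ℝ => C i j) x) = 0 := by
  ext i j
  simp [deriv_const]

end KPaux

section DvRules
open KPaux
variable {p q r : ℕ}

theorem Dx_mul {f : ℝ → ℝ → ℝ → Matrix (Fin p) (Fin q) ℝ}
    {g : ℝ → ℝ → ℝ → Matrix (Fin q) (Fin r) ℝ} (hf : SmoothMat f) (hg : SmoothMat g) :
    Dx (fun x y t => f x y t * g x y t)
      = fun x y t => Dx f x y t * g x y t + f x y t * Dx g x y t := by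
  funext x y t
  exact matDeriv_mul (fun i j => diffX hf y t i j) (fun i j => diffX hg y t i j)

theorem Dy_mul {f : ℝ → ℝ → ℝ → Matrix (Fin p) (Fin q) ℝ}
    {g : ℝ → ℝ → ℝ → Matrix (Fin q) (Fin r) ℝ} (hf : SmoothMat f) (hg : SmoothMat g) :
    Dy (fun x y t => f x y t * g x y t)
      = fun x y t => Dy f x y t * g x y t + f x y t * Dy g x y t := by
  funext x y t
  exact matDeriv_mul (fun i j => diffY hf x t i j) (fun i j => diffY hg x t i j)

theorem Dt_mul {f : ℝ → ℝ → ℝ → Matrix (Fin p) (Fin q) ℝ}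
    {g : ℝ → ℝ → ℝ → Matrix (Fin q) (Fin r) ℝ} (hf : SmoothMat f) (hg : SmoothMat g) :
    Dt (fun x y t => f x y t * g x y t)
      = fun x y t => Dt f x y t * g x y t + f x y t * Dt g x y t := by
  funext x y t
  exact matDeriv_mul (fun i j => diffT hf x y i j) (fun i j => diffT hg x y i j)

theorem Dx_add {f g : ℝ → ℝ → ℝ → Matrix (Fin p) (Fin q) ℝ} (hf : SmoothMat f) (hg : SmoothMat g) :
    Dx (fun x y t => f x y t + g x y t) = fun x y t => Dx f x y t + Dx g x y t := by
  funext x y t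
  exact matDeriv_add (fun i j => diffX hf y t i j) (fun i j => diffX hg y t i j)

theorem Dy_add {f g : ℝ → ℝ → ℝ → Matrix (Fin p) (Fin q) ℝ} (hf : SmoothMat f) (hg : SmoothMat g) :
    Dy (fun x y t => f x y t + g x y t) = fun x y t => Dy f x y t + Dy g x y t := by
  funext x y t
  exact matDeriv_add (fun i j => diffY hf x t i j) (fun i j => diffY hg x t i j)

theorem Dt_add {f g : ℝ → ℝ → ℝ → Matrix (Fin p) (Fin q) ℝ} (hf : SmoothMat f) (hg : SmoothMat g) :
    Dt (fun x y t => f x y t + g x y t) = fun x y t => Dt f x y t + Dt g x y t := by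
  funext x y t
  exact matDeriv_add (fun i j => diffT hf x y i j) (fun i j => diffT hg x y i j)

theorem Dx_sub {f g : ℝ → ℝ → ℝ → Matrix (Fin p) (Fin q) ℝ} (hf : SmoothMat f) (hg : SmoothMat g) :
    Dx (fun x y t => f x y t - g x y t) = fun x y t => Dx f x y t - Dx g x y t := by
  funext x y t
  exact matDeriv_sub (fun i j => diffX hf y t i j) (fun i j => diffX hg y t i j)

theorem Dy_sub {f g : ℝ → ℝ → ℝ → Matrix (Fin p) (Fin q) ℝ} (hf : SmoothMat f) (hg : SmoothMat g) :
    Dy (fun x y t => f x y t - g x y t) = fun x y t => Dy f x y t - Dy g x y t := by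
  funext x y t
  exact matDeriv_sub (fun i j => diffY hf x t i j) (fun i j => diffY hg x t i j)

theorem Dt_sub {f g : ℝ → ℝ → ℝ → Matrix (Fin p) (Fin q) ℝ} (hf : SmoothMat f) (hg : SmoothMat g) :
    Dt (fun x y t => f x y t - g x y t) = fun x y t => Dt f x y t - Dt g x y t := by
  funext x y t
  exact matDeriv_sub (fun i j => diffT hf x y i j) (fun i j => diffT hg x y i j)

theorem Dx_smul (c : ℝ) {f : ℝ → ℝ → ℝ → Matrix (Fin p) (Fin q) ℝ} (hf : SmoothMat f) :
    Dx (fun x y t => c • f x y t) = fun x y t => c • Dx f x y t := by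
  funext x y t; exact matDeriv_smul c (fun i j => diffX hf y t i j)

theorem Dy_smul (c : ℝ) {f : ℝ → ℝ → ℝ → Matrix (Fin p) (Fin q) ℝ} (hf : SmoothMat f) :
    Dy (fun x y t => c • f x y t) = fun x y t => c • Dy f x y t := by
  funext x y t; exact matDeriv_smul c (fun i j => diffY hf x t i j)

theorem Dt_smul (c : ℝ) {f : ℝ → ℝ → ℝ → Matrix (Fin p) (Fin q) ℝ} (hf : SmoothMat f) :
    Dt (fun x y t => c • f x y t) = fun x y t => c • Dt f x y t := by
  funext x y t; exact matDeriv_smul c (fun i j => diffT hf x y i j)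

theorem Dx_neg {f : ℝ → ℝ → ℝ → Matrix (Fin p) (Fin q) ℝ} :
    Dx (fun x y t => - f x y t) = fun x y t => - Dx f x y t := by
  funext x y t; exact matDeriv_neg

theorem Dy_neg {f : ℝ → ℝ → ℝ → Matrix (Fin p) (Fin q) ℝ} :
    Dy (fun x y t => - f x y t) = fun x y t => - Dy f x y t := by
  funext x y t; exact matDeriv_neg

theorem Dt_neg {f : ℝ → ℝ → ℝ → Matrix (Fin p) (Fin q) ℝ} :
    Dt (fun x y t => - f x y t) = fun x y t => - Dt f x y t := by
  funext x y t; exact matDeriv_neg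

theorem Dx_const {C : Matrix (Fin p) (Fin q) ℝ} :
    Dx (fun _ _ _ : ℝ => C) = fun _ _ _ => (0 : Matrix (Fin p) (Fin q) ℝ) := by
  funext x y t; exact matDeriv_const

theorem Dy_const {C : Matrix (Fin p) (Fin q) ℝ} :
    Dy (fun _ _ _ : ℝ => C) = fun _ _ _ => (0 : Matrix (Fin p) (Fin q) ℝ) := by
  funext x y t; exact matDeriv_const

theorem Dt_const {C : Matrix (Fin p) (Fin q) ℝ} :
    Dt (fun _ _ _ : ℝ => C) = fun _ _ _ => (0 : Matrix (Fin p) (Fin q) ℝ) := by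
  funext x y t; exact matDeriv_const

end DvRules

section Closure
open KPaux
variable {p q r : ℕ}

theorem smoothMat_const {C : Matrix (Fin p) (Fin q) ℝ} :
    SmoothMat (fun _ _ _ : ℝ => C) := fun _ _ => contDiff_const

theorem SmoothMat.add {f g : ℝ → ℝ → ℝ → Matrix (Fin p) (Fin q) ℝ}
    (hf : SmoothMat f) (hg : SmoothMat g) :
    SmoothMat (fun x y t => f x y t + g x y t) := by
  intro i j
  exact (hf i j).add (hg i j)

theorem SmoothMat.sub {f g : ℝ → ℝ → ℝ → Matrix (Fin p) (Fin q) ℝ}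
    (hf : SmoothMat f) (hg : SmoothMat g) :
    SmoothMat (fun x y t => f x y t - g x y t) := by
  intro i j
  exact (hf i j).sub (hg i j)

theorem SmoothMat.neg {f : ℝ → ℝ → ℝ → Matrix (Fin p) (Fin q) ℝ}
    (hf : SmoothMat f) : SmoothMat (fun x y t => - f x y t) := by
  intro i j
  exact (hf i j).neg

theorem SmoothMat.smul {c : ℝ} {f : ℝ → ℝ → ℝ → Matrix (Fin p) (Fin q) ℝ}
    (hf : SmoothMat f) : SmoothMat (fun x y t => c • f x y t) := by
  intro i j
  exact (hf i j).const_smul c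

theorem SmoothMat.matmul {f : ℝ → ℝ → ℝ → Matrix (Fin p) (Fin q) ℝ}
    {g : ℝ → ℝ → ℝ → Matrix (Fin q) (Fin r) ℝ} (hf : SmoothMat f) (hg : SmoothMat g) :
    SmoothMat (fun x y t => f x y t * g x y t) := by
  intro i j
  have : ContDiff ℝ (⊤ : ℕ∞) fun pt : ℝ × ℝ × ℝ =>
      ∑ k, f pt.1 pt.2.1 pt.2.2 i k * g pt.1 pt.2.1 pt.2.2 k j :=
    ContDiff.sum fun k _ => (hf i k).mul (hg k j)
  have he : (fun pt : ℝ × ℝ × ℝ => (f pt.1 pt.2.1 pt.2.2 * g pt.1 pt.2.1 pt.2.2) i j)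
      = fun pt : ℝ × ℝ × ℝ =>
        ∑ k, f pt.1 pt.2.1 pt.2.2 i k * g pt.1 pt.2.1 pt.2.2 k j := by
    funext pt; simp [Matrix.mul_apply]
  exact he ▸ this

/-- entries of `Dx f` via `fderiv`. -/
theorem dx_fderiv {f : ℝ → ℝ → ℝ → Matrix (Fin p) (Fin q) ℝ} (hf : SmoothMat f)
    (x y t : ℝ) (i : Fin p) (j : Fin q) :
    Dx f x y t i j = fderiv ℝ (ent f i j) (x, y, t) (1, 0, 0) := by
  have hL : HasDerivAt (fun s : ℝ => ((s, (y, t)) : ℝ × ℝ × ℝ)) (1, (0, 0)) x :=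
    HasDerivAt.prodMk (hasDerivAt_id x) (hasDerivAt_const x (y, t))
  have hFd : HasFDerivAt (ent f i j) (fderiv ℝ (ent f i j) (x, y, t)) (x, y, t) :=
    (((hf i j).differentiable (by simp)) (x, y, t)).hasFDerivAt
  have := hFd.comp_hasDerivAt x hL
  exact this.deriv

theorem dy_fderiv {f : ℝ → ℝ → ℝ → Matrix (Fin p) (Fin q) ℝ} (hf : SmoothMat f)
    (x y t : ℝ) (i : Fin p) (j : Fin q) :
    Dy f x y t i j = fderiv ℝ (ent f i j) (x, y, t) (0, 1, 0) := by
  have hL : HasDerivAt (fun s : ℝ => ((x, (s, t)) : ℝ × ℝ × ℝ)) (0, (1, 0)) y :=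
    HasDerivAt.prodMk (hasDerivAt_const y x) (HasDerivAt.prodMk (hasDerivAt_id y) (hasDerivAt_const y t))
  have hFd : HasFDerivAt (ent f i j) (fderiv ℝ (ent f i j) (x, y, t)) (x, y, t) :=
    (((hf i j).differentiable (by simp)) (x, y, t)).hasFDerivAt
  have := hFd.comp_hasDerivAt y hL
  exact this.deriv

theorem dt_fderiv {f : ℝ → ℝ → ℝ → Matrix (Fin p) (Fin q) ℝ} (hf : SmoothMat f)
    (x y t : ℝ) (i : Fin p) (j : Fin q) :
    Dt f x y t i j = fderiv ℝ (ent f i j) (x, y, t) (0, 0, 1) := by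
  have hL : HasDerivAt (fun s : ℝ => ((x, (y, s)) : ℝ × ℝ × ℝ)) (0, (0, 1)) t :=
    HasDerivAt.prodMk (hasDerivAt_const t x) (HasDerivAt.prodMk (hasDerivAt_const t y) (hasDerivAt_id t))
  have hFd : HasFDerivAt (ent f i j) (fderiv ℝ (ent f i j) (x, y, t)) (x, y, t) :=
    (((hf i j).differentiable (by simp)) (x, y, t)).hasFDerivAt
  have := hFd.comp_hasDerivAt t hL
  exact this.deriv

theorem SmoothMat.dx {f : ℝ → ℝ → ℝ → Matrix (Fin p) (Fin q) ℝ} (hf : SmoothMat f) :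
    SmoothMat (Dx f) := by
  intro i j
  have key : (fun pt : ℝ × ℝ × ℝ => Dx f pt.1 pt.2.1 pt.2.2 i j)
      = fun pt => fderiv ℝ (ent f i j) pt ((1 : ℝ), (0 : ℝ), (0 : ℝ)) := by
    funext pt
    exact dx_fderiv hf pt.1 pt.2.1 pt.2.2 i j
  rw [key]
  exact ((hf i j).fderiv_right (by simp)).clm_apply contDiff_const

theorem SmoothMat.dy {f : ℝ → ℝ → ℝ → Matrix (Fin p) (Fin q) ℝ} (hf : SmoothMat f) :
    SmoothMat (Dy f) := by
  intro i j
  have key : (fun pt : ℝ × ℝ × ℝ => Dy f pt.1 pt.2.1 pt.2.2 i j)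
      = fun pt => fderiv ℝ (ent f i j) pt ((0 : ℝ), (1 : ℝ), (0 : ℝ)) := by
    funext pt
    exact dy_fderiv hf pt.1 pt.2.1 pt.2.2 i j
  rw [key]
  exact ((hf i j).fderiv_right (by simp)).clm_apply contDiff_const

theorem SmoothMat.dt {f : ℝ → ℝ → ℝ → Matrix (Fin p) (Fin q) ℝ} (hf : SmoothMat f) :
    SmoothMat (Dt f) := by
  intro i j
  have key : (fun pt : ℝ × ℝ × ℝ => Dt f pt.1 pt.2.1 pt.2.2 i j)
      = fun pt => fderiv ℝ (ent f i j) pt ((0 : ℝ), (0 : ℝ), (1 : ℝ)) := by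
    funext pt
    exact dt_fderiv hf pt.1 pt.2.1 pt.2.2 i j
  rw [key]
  exact ((hf i j).fderiv_right (by simp)).clm_apply contDiff_const

end Closure

section Symm
open KPaux
variable {p q : ℕ}

private theorem mixed_fderiv {F : ℝ × ℝ × ℝ → ℝ} (hF : ContDiff ℝ (⊤ : ℕ∞) F)
    (pt : ℝ × ℝ × ℝ) (v w : ℝ × ℝ × ℝ) :
    fderiv ℝ (fun z => fderiv ℝ F z v) pt w = fderiv ℝ (fun z => fderiv ℝ F z w) pt v := by
  have h1 : ∀ z, HasFDerivAt F (fderiv ℝ F z) z := fun z =>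
    ((hF.differentiable (by simp)) z).hasFDerivAt
  have hd : DifferentiableAt ℝ (fderiv ℝ F) pt :=
    ((hF.fderiv_right (m := (⊤ : ℕ∞)) (by simp)).differentiable (by simp)) pt
  have h2 : HasFDerivAt (fderiv ℝ F) (fderiv ℝ (fderiv ℝ F) pt) pt := hd.hasFDerivAt
  have hsymm := second_derivative_symmetric h1 h2
  have hv : fderiv ℝ (fun z => fderiv ℝ F z v) pt
      = (fderiv ℝ (fderiv ℝ F) pt).flip v + ((fderiv ℝ F pt).comp (0 : (ℝ×ℝ×ℝ) →L[ℝ] (ℝ×ℝ×ℝ))) := by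
    simpa using fderiv_clm_apply hd (differentiableAt_const v)
  have hw : fderiv ℝ (fun z => fderiv ℝ F z w) pt
      = (fderiv ℝ (fderiv ℝ F) pt).flip w + ((fderiv ℝ F pt).comp (0 : (ℝ×ℝ×ℝ) →L[ℝ] (ℝ×ℝ×ℝ))) := by
    simpa using fderiv_clm_apply hd (differentiableAt_const w)
  rw [hv, hw]
  simp only [ContinuousLinearMap.add_apply, ContinuousLinearMap.flip_apply,
    ContinuousLinearMap.comp_apply, ContinuousLinearMap.zero_apply, map_zero]
  rw [hsymm w v]

theorem Dy_Dx_comm {f : ℝ → ℝ → ℝ → Matrix (Fin p) (Fin q) ℝ} (hf : SmoothMat f) :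
    Dy (Dx f) = Dx (Dy f) := by
  funext x y t
  ext i j
  rw [dy_fderiv hf.dx x y t i j, dx_fderiv hf.dy x y t i j]
  have e1 : ent (Dx f) i j = fun z => fderiv ℝ (ent f i j) z ((1:ℝ), (0:ℝ), (0:ℝ)) := by
    funext z; exact dx_fderiv hf z.1 z.2.1 z.2.2 i j
  have e2 : ent (Dy f) i j = fun z => fderiv ℝ (ent f i j) z ((0:ℝ), (1:ℝ), (0:ℝ)) := by
    funext z; exact dy_fderiv hf z.1 z.2.1 z.2.2 i j
  rw [e1, e2]
  exact mixed_fderiv (hf i j) (x, y, t) _ _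

end Symm

section Inverse
open KPaux
variable {p Nn : ℕ}

private theorem contDiff_matrix_det {A : ℝ × ℝ × ℝ → Matrix (Fin Nn) (Fin Nn) ℝ}
    (hA : ∀ i j, ContDiff ℝ (⊤ : ℕ∞) fun pt => A pt i j) :
    ContDiff ℝ (⊤ : ℕ∞) fun pt => (A pt).det := by
  have : (fun pt => (A pt).det)
      = fun pt => ∑ σ : Equiv.Perm (Fin Nn),
          ((Equiv.Perm.sign σ : ℤ) : ℝ) * ∏ i, A pt (σ i) i := by
    funext pt; rw [Matrix.det_apply']
  rw [this]
  exact ContDiff.sum fun σ _ =>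
    contDiff_const.mul (contDiff_prod fun i _ => hA (σ i) i)

theorem SmoothMat.inv {Ω : ℝ → ℝ → ℝ → Matrix (Fin Nn) (Fin Nn) ℝ}
    (hΩ : SmoothMat Ω) (hinv : ∀ x y t, IsUnit (Ω x y t).det) :
    SmoothMat (fun x y t => (Ω x y t)⁻¹) := by
  intro i j
  have hdet : ContDiff ℝ (⊤ : ℕ∞) fun pt : ℝ × ℝ × ℝ => (Ω pt.1 pt.2.1 pt.2.2).det :=
    contDiff_matrix_det fun i j => hΩ i j
  have hadj : ContDiff ℝ (⊤ : ℕ∞) fun pt : ℝ × ℝ × ℝ => (Ω pt.1 pt.2.1 pt.2.2).adjugate i j := by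
    have : (fun pt : ℝ × ℝ × ℝ => (Ω pt.1 pt.2.1 pt.2.2).adjugate i j)
        = fun pt => ((Ω pt.1 pt.2.1 pt.2.2).updateRow j (Pi.single i 1)).det := by
      funext pt; rw [Matrix.adjugate_apply]
    rw [this]
    refine contDiff_matrix_det fun k l => ?_
    by_cases hk : k = j
    · subst hk
      have : (fun pt : ℝ × ℝ × ℝ => ((Ω pt.1 pt.2.1 pt.2.2).updateRow k (Pi.single i 1)) k l)
          = fun _ : ℝ × ℝ × ℝ => Pi.single (M := fun _ : Fin Nn => ℝ) i 1 l := by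
        funext pt; simp [Matrix.updateRow_apply]
      rw [this]; exact contDiff_const
    · have : (fun pt : ℝ × ℝ × ℝ => ((Ω pt.1 pt.2.1 pt.2.2).updateRow j (Pi.single i 1)) k l)
          = fun pt => Ω pt.1 pt.2.1 pt.2.2 k l := by
        funext pt; simp [Matrix.updateRow_apply, hk]
      rw [this]; exact hΩ k l
  have hne : ∀ pt : ℝ × ℝ × ℝ, (Ω pt.1 pt.2.1 pt.2.2).det ≠ 0 := fun pt =>
    (hinv pt.1 pt.2.1 pt.2.2).ne_zero
  have he : (fun pt : ℝ × ℝ × ℝ => (Ω pt.1 pt.2.1 pt.2.2)⁻¹ i j)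
      = fun pt => ((Ω pt.1 pt.2.1 pt.2.2).det)⁻¹ * (Ω pt.1 pt.2.1 pt.2.2).adjugate i j := by
    funext pt
    rw [Matrix.inv_def, Matrix.smul_apply, Ring.inverse_eq_inv, smul_eq_mul]
  rw [he]
  exact (hdet.inv hne).mul hadj

end Inverse

theorem Dx_inv {Nn : ℕ} {Ω : ℝ → ℝ → ℝ → Matrix (Fin Nn) (Fin Nn) ℝ}
    (hΩ : SmoothMat Ω) (hinv : ∀ x y t, IsUnit (Ω x y t).det) :
    Dx (fun x y t => (Ω x y t)⁻¹)
      = fun x y t => -((Ω x y t)⁻¹ * Dx Ω x y t * (Ω x y t)⁻¹) := by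
  have hψ := hΩ.inv hinv
  have h1 : (fun x y t => Ω x y t * (Ω x y t)⁻¹)
      = (fun _ _ _ : ℝ => (1 : Matrix (Fin Nn) (Fin Nn) ℝ)) := by
    funext x y t; exact Matrix.mul_nonsing_inv _ (hinv x y t)
  have h2 : Dx (fun x y t => Ω x y t * (Ω x y t)⁻¹)
      = fun _ _ _ : ℝ => (0 : Matrix (Fin Nn) (Fin Nn) ℝ) := by rw [h1, Dx_const]
  rw [Dx_mul hΩ hψ] at h2
  funext x y t
  have h3 := congrFun (congrFun (congrFun h2 x) y) t
  have h4 : Ω x y t * Dx (fun x y t => (Ω x y t)⁻¹) x y t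
      = -(Dx Ω x y t * (Ω x y t)⁻¹) := by
    have := eq_neg_of_add_eq_zero_right h3
    exact this
  calc Dx (fun x y t => (Ω x y t)⁻¹) x y t
      = ((Ω x y t)⁻¹ * Ω x y t) * Dx (fun x y t => (Ω x y t)⁻¹) x y t := by
        rw [Matrix.nonsing_inv_mul _ (hinv x y t), one_mul]
    _ = (Ω x y t)⁻¹ * (Ω x y t * Dx (fun x y t => (Ω x y t)⁻¹) x y t) := by
        rw [mul_assoc]
    _ = -((Ω x y t)⁻¹ * Dx Ω x y t * (Ω x y t)⁻¹) := by
        rw [h4, mul_neg, mul_assoc]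

theorem Dy_inv {Nn : ℕ} {Ω : ℝ → ℝ → ℝ → Matrix (Fin Nn) (Fin Nn) ℝ}
    (hΩ : SmoothMat Ω) (hinv : ∀ x y t, IsUnit (Ω x y t).det) :
    Dy (fun x y t => (Ω x y t)⁻¹)
      = fun x y t => -((Ω x y t)⁻¹ * Dy Ω x y t * (Ω x y t)⁻¹) := by
  have hψ := hΩ.inv hinv
  have h1 : (fun x y t => Ω x y t * (Ω x y t)⁻¹)
      = (fun _ _ _ : ℝ => (1 : Matrix (Fin Nn) (Fin Nn) ℝ)) := by
    funext x y t; exact Matrix.mul_nonsing_inv _ (hinv x y t)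
  have h2 : Dy (fun x y t => Ω x y t * (Ω x y t)⁻¹)
      = fun _ _ _ : ℝ => (0 : Matrix (Fin Nn) (Fin Nn) ℝ) := by rw [h1, Dy_const]
  rw [Dy_mul hΩ hψ] at h2
  funext x y t
  have h3 := congrFun (congrFun (congrFun h2 x) y) t
  have h4 : Ω x y t * Dy (fun x y t => (Ω x y t)⁻¹) x y t
      = -(Dy Ω x y t * (Ω x y t)⁻¹) := by
    have := eq_neg_of_add_eq_zero_right h3
    exact this
  calc Dy (fun x y t => (Ω x y t)⁻¹) x y t
      = ((Ω x y t)⁻¹ * Ω x y t) * Dy (fun x y t => (Ω x y t)⁻¹) x y t := by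
        rw [Matrix.nonsing_inv_mul _ (hinv x y t), one_mul]
    _ = (Ω x y t)⁻¹ * (Ω x y t * Dy (fun x y t => (Ω x y t)⁻¹) x y t) := by
        rw [mul_assoc]
    _ = -((Ω x y t)⁻¹ * Dy Ω x y t * (Ω x y t)⁻¹) := by
        rw [h4, mul_neg, mul_assoc]

theorem Dt_inv {Nn : ℕ} {Ω : ℝ → ℝ → ℝ → Matrix (Fin Nn) (Fin Nn) ℝ}
    (hΩ : SmoothMat Ω) (hinv : ∀ x y t, IsUnit (Ω x y t).det) :
    Dt (fun x y t => (Ω x y t)⁻¹)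
      = fun x y t => -((Ω x y t)⁻¹ * Dt Ω x y t * (Ω x y t)⁻¹) := by
  have hψ := hΩ.inv hinv
  have h1 : (fun x y t => Ω x y t * (Ω x y t)⁻¹)
      = (fun _ _ _ : ℝ => (1 : Matrix (Fin Nn) (Fin Nn) ℝ)) := by
    funext x y t; exact Matrix.mul_nonsing_inv _ (hinv x y t)
  have h2 : Dt (fun x y t => Ω x y t * (Ω x y t)⁻¹)
      = fun _ _ _ : ℝ => (0 : Matrix (Fin Nn) (Fin Nn) ℝ) := by rw [h1, Dt_const]
  rw [Dt_mul hΩ hψ] at h2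
  funext x y t
  have h3 := congrFun (congrFun (congrFun h2 x) y) t
  have h4 : Ω x y t * Dt (fun x y t => (Ω x y t)⁻¹) x y t
      = -(Dt Ω x y t * (Ω x y t)⁻¹) := by
    have := eq_neg_of_add_eq_zero_right h3
    exact this
  calc Dt (fun x y t => (Ω x y t)⁻¹) x y t
      = ((Ω x y t)⁻¹ * Ω x y t) * Dt (fun x y t => (Ω x y t)⁻¹) x y t := by
        rw [Matrix.nonsing_inv_mul _ (hinv x y t), one_mul]
    _ = (Ω x y t)⁻¹ * (Ω x y t * Dt (fun x y t => (Ω x y t)⁻¹) x y t) := by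
        rw [mul_assoc]
    _ = -((Ω x y t)⁻¹ * Dt Ω x y t * (Ω x y t)⁻¹) := by
        rw [h4, mul_neg, mul_assoc]

theorem funext3 {α β γ δ : Type*} {f g : α → β → γ → δ}
    (h : ∀ a b c, f a b c = g a b c) : f = g := by
  funext a b c; exact h a b c

theorem Dy_Dx_comm' {p q : ℕ} {f : ℝ → ℝ → ℝ → Matrix (Fin p) (Fin q) ℝ}
    (hf : SmoothMat f) :
    Dy (fun x y t => Dx f x y t) = fun x y t => Dx (Dy f) x y t :=
  Dy_Dx_comm hf


set_option maxHeartbeats 4000000 in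
/-- Binary Darboux transformation for the pKP_K equation. -/
theorem stmt_2 {m n N : ℕ} (K : Matrix (Fin n) (Fin m) ℝ)
    (φ₀ : ℝ → ℝ → ℝ → Matrix (Fin m) (Fin n) ℝ)
    (hφ₀smooth : SmoothMat φ₀) (hφ₀ : pKP K φ₀)
    (θ : ℝ → ℝ → ℝ → Matrix (Fin m) (Fin N) ℝ)
    (χ : ℝ → ℝ → ℝ → Matrix (Fin N) (Fin n) ℝ)
    (Ω : ℝ → ℝ → ℝ → Matrix (Fin N) (Fin N) ℝ)
    (hθsmooth : SmoothMat θ) (hχsmooth : SmoothMat χ) (hΩsmooth : SmoothMat Ω)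
    (hθy : ∀ x y t, Dy θ x y t = Dx (Dx θ) x y t + (2 : ℝ) • (Dx φ₀ x y t * K * θ x y t))
    (hθt : ∀ x y t, Dt θ x y t = Dx (Dx (Dx θ)) x y t
      + (3 : ℝ) • (Dx φ₀ x y t * K * Dx θ x y t)
      + ((3 : ℝ)/2) • ((Dy φ₀ x y t + Dx (Dx φ₀) x y t) * K * θ x y t))
    (hχy : ∀ x y t, Dy χ x y t = - Dx (Dx χ) x y t - (2 : ℝ) • (χ x y t * K * Dx φ₀ x y t))
    (hχt : ∀ x y t, Dt χ x y t = Dx (Dx (Dx χ)) x y t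
      + (3 : ℝ) • (Dx χ x y t * K * Dx φ₀ x y t)
      - ((3 : ℝ)/2) • (χ x y t * K * (Dy φ₀ x y t - Dx (Dx φ₀) x y t)))
    (hΩx : ∀ x y t, Dx Ω x y t = -(χ x y t * K * θ x y t))
    (hΩy : ∀ x y t, Dy Ω x y t = -(χ x y t * K * Dx θ x y t) + Dx χ x y t * K * θ x y t)
    (hΩt : ∀ x y t, Dt Ω x y t = -(χ x y t * K * Dx (Dx θ) x y t)
      + Dx χ x y t * K * Dx θ x y t - Dx (Dx χ) x y t * K * θ x y t
      - (3 : ℝ) • (χ x y t * K * Dx φ₀ x y t * K * θ x y t))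
    (hinv : ∀ x y t, IsUnit (Ω x y t).det) :
    pKP K (fun x y t => φ₀ x y t - θ x y t * (Ω x y t)⁻¹ * χ x y t) := by
  
  intro x y t
  have hψs : SmoothMat (fun x y t => (Ω x y t)⁻¹) := hΩsmooth.inv hinv
  have hθy' := funext3 hθy
  have hθt' := funext3 hθt
  have hχy' := funext3 hχy
  have hχt' := funext3 hχt
  have hΩx' := funext3 hΩx
  have hΩy' := funext3 hΩy
  have hΩt' := funext3 hΩt
  have hψx := Dx_inv hΩsmooth hinv
  have hψy := Dy_inv hΩsmooth hinv
  have hψt := Dt_inv hΩsmooth hinv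
  have h := hφ₀ x y t
  simp (disch := (repeat' first
      | exact hθsmooth | exact hχsmooth | exact hΩsmooth | exact hφ₀smooth | exact hψs
      | apply SmoothMat.matmul | apply SmoothMat.add | apply SmoothMat.sub
      | apply SmoothMat.neg | apply SmoothMat.smul
      | apply SmoothMat.dx | apply SmoothMat.dy | apply SmoothMat.dt
      | exact smoothMat_const)) only [Dx_mul, Dy_mul, Dt_mul, Dx_add, Dy_add, Dt_add, Dx_sub, Dy_sub, Dt_sub,
     Dx_smul, Dy_smul, Dt_smul, Dx_neg, Dy_neg, Dt_neg, Dx_const, Dy_const, Dt_const,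
     Dy_Dx_comm, Dy_Dx_comm', hθy', hθt', hχy', hχt', hΩx', hΩy', hΩt',
     hψx, hψy, hψt] at h ⊢
  simp only [Matrix.mul_zero, Matrix.zero_mul, mul_zero, zero_mul, add_zero, zero_add,
    Matrix.mul_add, Matrix.add_mul, Matrix.sub_mul, Matrix.mul_sub,
    Matrix.neg_mul, Matrix.mul_neg, neg_neg, smul_add, smul_sub, smul_neg, smul_smul,
    Matrix.mul_assoc, Matrix.smul_mul, Matrix.mul_smul,
    smul_zero, neg_zero, sub_zero, zero_sub] at h ⊢
  conv_rhs => rw [← h]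
  match_scalars <;> ring
end

section
/- Let K be a constant real n×m matrix, P_a (a=1,…,A) and Q_b (b=1,…,B) constant real N×N matrices, θ_a constant m×N matrices and χ_b constant N×n matrices. Define ϑ(P) = x P + y P² + t P³, and set θ(x,y,t) = Σ_a θ_a exp(ϑ(P_a)) and χ(x,y,t) = Σ_b exp(−ϑ(Q_b)) χ_b. Suppose constant N×N matrices W_{ba} satisfy the Sylvester equations Q_b W_{ba} − W_{ba} P_a = χ_b K θ_a for all a,b, and let Ω₀ be a constant N×N matrix. Then Ω(x,y,t) = Ω₀ + Σ_{a,b} exp(−ϑ(Q_b)) W_{ba} exp(ϑ(P_a)) satisfies Ω_x = − χ K θ, Ω_y = − χ K θ_x + χ_x K θ, and Ω_t = − χ K θ_{xx} + χ_x K θ_x − χ_{xx} K θ. -/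
open Matrix

/-- Entrywise derivative predicate for matrix-valued functions of one real variable. -/
def MDeriv {a b : ℕ} (F : ℝ → Matrix (Fin a) (Fin b) ℝ)
    (F' : Matrix (Fin a) (Fin b) ℝ) (x : ℝ) : Prop :=
  ∀ i j, HasDerivAt (fun s => F s i j) (F' i j) x

namespace MDeriv
variable {a b c : ℕ} {x : ℝ}

lemma congr {F G : ℝ → Matrix (Fin a) (Fin b) ℝ} {F' : Matrix (Fin a) (Fin b) ℝ}
    (h : ∀ s, F s = G s) (hG : MDeriv G F' x) : MDeriv F F' x := by
  intro i j
  have hfun : (fun s => F s i j) = fun s => G s i j := funext fun s => by rw [h s]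
  rw [hfun]; exact hG i j

lemma const (C : Matrix (Fin a) (Fin b) ℝ) (x : ℝ) : MDeriv (fun _ => C) 0 x := by
  intro i j; simpa using hasDerivAt_const x (C i j)

lemma add {F G : ℝ → Matrix (Fin a) (Fin b) ℝ} {F' G' : Matrix (Fin a) (Fin b) ℝ}
    (hF : MDeriv F F' x) (hG : MDeriv G G' x) :
    MDeriv (fun s => F s + G s) (F' + G') x := by
  intro i j; simpa using (hF i j).fun_add (hG i j)

lemma const_add (C : Matrix (Fin a) (Fin b) ℝ) {G : ℝ → Matrix (Fin a) (Fin b) ℝ}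
    {G' : Matrix (Fin a) (Fin b) ℝ} (hG : MDeriv G G' x) :
    MDeriv (fun s => C + G s) G' x := by
  simpa using (MDeriv.const C x).add hG

lemma sum {ι : Type*} [Fintype ι] {F : ι → ℝ → Matrix (Fin a) (Fin b) ℝ}
    {F' : ι → Matrix (Fin a) (Fin b) ℝ}
    (h : ∀ k, MDeriv (F k) (F' k) x) :
    MDeriv (fun s => ∑ k, F k s) (∑ k, F' k) x := by
  intro i j
  have := HasDerivAt.fun_sum (fun k (_ : k ∈ Finset.univ) => h k i j)
  simpa [Matrix.sum_apply] using this

lemma mul {F : ℝ → Matrix (Fin a) (Fin b) ℝ} {G : ℝ → Matrix (Fin b) (Fin c) ℝ}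
    {F' : Matrix (Fin a) (Fin b) ℝ} {G' : Matrix (Fin b) (Fin c) ℝ}
    (hF : MDeriv F F' x) (hG : MDeriv G G' x) :
    MDeriv (fun s => F s * G s) (F' * G x + F x * G') x := by
  intro i j
  have h1 : HasDerivAt (fun s => ∑ k, F s i k * G s k j)
      (∑ k, (F' i k * G x k j + F x i k * G' k j)) x :=
    HasDerivAt.fun_sum fun k _ => (hF i k).fun_mul (hG k j)
  have h2 : (fun s => F s * G s) = fun s => Matrix.of fun i j => ∑ k, F s i k * G s k j := by
    funext s; ext i j; simp [Matrix.mul_apply]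
  rw [h2]
  simpa [Matrix.mul_apply, Finset.sum_add_distrib] using h1

lemma mul_const {F : ℝ → Matrix (Fin a) (Fin b) ℝ} {F' : Matrix (Fin a) (Fin b) ℝ}
    (hF : MDeriv F F' x) (C : Matrix (Fin b) (Fin c) ℝ) :
    MDeriv (fun s => F s * C) (F' * C) x := by
  simpa using hF.mul (MDeriv.const C x)

lemma const_mul {G : ℝ → Matrix (Fin b) (Fin c) ℝ} {G' : Matrix (Fin b) (Fin c) ℝ}
    (C : Matrix (Fin a) (Fin b) ℝ) (hG : MDeriv G G' x) :
    MDeriv (fun s => C * G s) (C * G') x := by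
  simpa using (MDeriv.const C x).mul hG

end MDeriv

lemma mderiv_exp_base {N : ℕ} (M C : Matrix (Fin N) (Fin N) ℝ) (h : Commute M C) (x : ℝ) :
    MDeriv (fun s => NormedSpace.exp (s • M + C))
      (NormedSpace.exp (x • M + C) * M) x := by
  intro i j
  letI : SeminormedRing (Matrix (Fin N) (Fin N) ℝ) := Matrix.linftyOpSemiNormedRing
  letI : NormedRing (Matrix (Fin N) (Fin N) ℝ) := Matrix.linftyOpNormedRing
  letI : NormedAlgebra ℝ (Matrix (Fin N) (Fin N) ℝ) := Matrix.linftyOpNormedAlgebra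
  have hd : HasDerivAt (fun s : ℝ => NormedSpace.exp (s • M + C))
      (NormedSpace.exp (x • M + C) * M) x := by
    have hfun : (fun s : ℝ => NormedSpace.exp (s • M + C))
        = fun s : ℝ => NormedSpace.exp (s • M) * NormedSpace.exp C := by
      funext s; exact Matrix.exp_add_of_commute _ _ (h.smul_left s)
    rw [hfun, Matrix.exp_add_of_commute _ _ (h.smul_left x)]
    have hd2 := (hasDerivAt_exp_smul_const (𝕂 := ℝ) M x).mul_const (NormedSpace.exp C)
    convert hd2 using 1
    case e'_4 => rfl
    case e'_5 => rfl
    case e'_6 => rfl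
    case e'_8 => rfl
    have hc : Commute M (NormedSpace.exp C) := h.exp_right
    rw [mul_assoc, mul_assoc, hc.eq]
    rfl
  let L : Matrix (Fin N) (Fin N) ℝ →ₗ[ℝ] ℝ :=
    { toFun := fun A => A i j, map_add' := fun _ _ => rfl, map_smul' := fun _ _ => rfl }
  exact (LinearMap.toContinuousLinearMap L).hasFDerivAt.comp_hasDerivAt x hd

lemma mderiv_exp' {N : ℕ} (M C : Matrix (Fin N) (Fin N) ℝ) (h : Commute M C)
    {f : ℝ → Matrix (Fin N) (Fin N) ℝ} (hf : ∀ s, f s = s • M + C) (x : ℝ) :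
    MDeriv (fun s => NormedSpace.exp (f s)) (NormedSpace.exp (f x) * M) x := by
  have h1 : ∀ s, NormedSpace.exp (f s) = NormedSpace.exp (s • M + C) := fun s => by rw [hf s]
  have h2 := MDeriv.congr h1 (mderiv_exp_base M C h x)
  rwa [← h1 x] at h2

lemma Dx_eq {a b : ℕ} {φ : ℝ → ℝ → ℝ → Matrix (Fin a) (Fin b) ℝ} {x y t : ℝ}
    {D : Matrix (Fin a) (Fin b) ℝ} (h : MDeriv (fun s => φ s y t) D x) : Dx φ x y t = D := by
  ext i j
  simpa [Dx] using (h i j).deriv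

lemma Dy_eq {a b : ℕ} {φ : ℝ → ℝ → ℝ → Matrix (Fin a) (Fin b) ℝ} {x y t : ℝ}
    {D : Matrix (Fin a) (Fin b) ℝ} (h : MDeriv (fun s => φ x s t) D y) : Dy φ x y t = D := by
  ext i j
  simpa [Dy] using (h i j).deriv

lemma Dt_eq {a b : ℕ} {φ : ℝ → ℝ → ℝ → Matrix (Fin a) (Fin b) ℝ} {x y t : ℝ}
    {D : Matrix (Fin a) (Fin b) ℝ} (h : MDeriv (fun s => φ x y s) D t) : Dt φ x y t = D := by
  ext i j
  simpa [Dt] using (h i j).deriv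

section Terms
variable {N n m : ℕ}
variable (F G Pm Qm Wm : Matrix (Fin N) (Fin N) ℝ)
variable (Cc : Matrix (Fin N) (Fin n) ℝ) (Kk : Matrix (Fin n) (Fin m) ℝ)
variable (Tc : Matrix (Fin m) (Fin N) ℝ)

lemma hX_aux (h : Qm * Wm - Wm * Pm = Cc * Kk * Tc) (X : Matrix (Fin N) (Fin N) ℝ) :
    Cc * (Kk * (Tc * X)) = Qm * (Wm * X) - Wm * (Pm * X) := by
  have := congrArg (· * X) h
  simp only [Matrix.sub_mul, Matrix.mul_assoc] at this
  exact this.symm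

lemma term_x (hcp : Commute Pm G) (h : Qm * Wm - Wm * Pm = Cc * Kk * Tc) :
    F * -Qm * Wm * G + F * Wm * (G * Pm) = -(F * Cc * Kk * (Tc * G)) := by
  rw [← hcp.eq]
  simp only [Matrix.mul_assoc, Matrix.mul_neg, Matrix.neg_mul, neg_neg, hX_aux Pm Qm Wm Cc Kk Tc h,
    Matrix.mul_sub]
  abel

lemma term_y (hcp : Commute Pm G) (h : Qm * Wm - Wm * Pm = Cc * Kk * Tc) :
    F * -(Qm ^ 2) * Wm * G + F * Wm * (G * Pm ^ 2)
      = -(F * Cc * Kk * (Tc * (G * Pm))) + F * -Qm * Cc * Kk * (Tc * G) := by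
  have h1 : G * Pm = Pm * G := hcp.eq.symm
  have h2 : G * Pm ^ 2 = Pm * (Pm * G) := by
    rw [← (hcp.pow_left 2).eq, pow_two, Matrix.mul_assoc]
  rw [h2, h1]
  simp only [pow_two, Matrix.mul_assoc, Matrix.mul_neg, Matrix.neg_mul, neg_neg,
    hX_aux Pm Qm Wm Cc Kk Tc h, Matrix.mul_sub]
  abel

lemma term_t (hcp : Commute Pm G) (h : Qm * Wm - Wm * Pm = Cc * Kk * Tc) :
    F * -(Qm ^ 3) * Wm * G + F * Wm * (G * Pm ^ 3)
      = -(F * Cc * Kk * (Tc * (G * Pm * Pm))) + F * -Qm * Cc * Kk * (Tc * (G * Pm))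
        - F * -Qm * -Qm * Cc * Kk * (Tc * G) := by
  have h1 : G * Pm = Pm * G := hcp.eq.symm
  have h2 : G * Pm * Pm = Pm * (Pm * G) := by
    rw [h1, Matrix.mul_assoc, h1]
  have h3 : G * Pm ^ 3 = Pm * (Pm * (Pm * G)) := by
    rw [← (hcp.pow_left 3).eq, pow_succ, pow_two, Matrix.mul_assoc, Matrix.mul_assoc]
  rw [h3, h2, h1]
  simp only [pow_succ, pow_two, pow_one, pow_zero, one_mul, Matrix.one_mul, Matrix.mul_assoc,
    Matrix.mul_neg, Matrix.neg_mul, neg_neg, hX_aux Pm Qm Wm Cc Kk Tc h, Matrix.mul_sub]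
  abel

end Terms


/-- With `ϑ(P) = x P + y P² + t P³`, `θ = Σ_a θ_a exp(ϑ(P_a))`,
`χ = Σ_b exp(−ϑ(Q_b)) χ_b`, and `W_{ba}` solving the Sylvester equations
`Q_b W_{ba} − W_{ba} P_a = χ_b K θ_a`, the matrix function
`Ω = Ω₀ + Σ_{a,b} exp(−ϑ(Q_b)) W_{ba} exp(ϑ(P_a))` satisfies
`Ω_x = − χ K θ`, `Ω_y = − χ K θ_x + χ_x K θ`, and
`Ω_t = − χ K θ_{xx} + χ_x K θ_x − χ_{xx} K θ`. -/
theorem stmt_4 {m n N A B : ℕ} (K : Matrix (Fin n) (Fin m) ℝ)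
    (P : Fin A → Matrix (Fin N) (Fin N) ℝ) (Q : Fin B → Matrix (Fin N) (Fin N) ℝ)
    (θc : Fin A → Matrix (Fin m) (Fin N) ℝ) (χc : Fin B → Matrix (Fin N) (Fin n) ℝ)
    (ϑ : Matrix (Fin N) (Fin N) ℝ → ℝ → ℝ → ℝ → Matrix (Fin N) (Fin N) ℝ)
    (hϑ : ∀ M x y t, ϑ M x y t = x • M + y • M ^ 2 + t • M ^ 3)
    (θ : ℝ → ℝ → ℝ → Matrix (Fin m) (Fin N) ℝ)
    (hθ : ∀ x y t, θ x y t = ∑ a, θc a * NormedSpace.exp (ϑ (P a) x y t))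
    (χ : ℝ → ℝ → ℝ → Matrix (Fin N) (Fin n) ℝ)
    (hχ : ∀ x y t, χ x y t = ∑ b, NormedSpace.exp (-ϑ (Q b) x y t) * χc b)
    (W : Fin B → Fin A → Matrix (Fin N) (Fin N) ℝ)
    (hW : ∀ a b, Q b * W b a - W b a * P a = χc b * K * θc a)
    (Ω₀ : Matrix (Fin N) (Fin N) ℝ)
    (Ω : ℝ → ℝ → ℝ → Matrix (Fin N) (Fin N) ℝ)
    (hΩ : ∀ x y t, Ω x y t
      = Ω₀ + ∑ a, ∑ b, NormedSpace.exp (-ϑ (Q b) x y t) * W b a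
          * NormedSpace.exp (ϑ (P a) x y t)) :
    (∀ x y t, Dx Ω x y t = -(χ x y t * K * θ x y t)) ∧
    (∀ x y t, Dy Ω x y t = -(χ x y t * K * Dx θ x y t) + Dx χ x y t * K * θ x y t) ∧
    (∀ x y t, Dt Ω x y t = -(χ x y t * K * Dx (Dx θ) x y t)
      + Dx χ x y t * K * Dx θ x y t - Dx (Dx χ) x y t * K * θ x y t) := by
  -- derivatives of the exponential factors
  have hGx : ∀ (a : Fin A) (x y t : ℝ),
      MDeriv (fun s => NormedSpace.exp (ϑ (P a) s y t))
        (NormedSpace.exp (ϑ (P a) x y t) * P a) x := by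
    intro a x y t
    exact mderiv_exp' (P a) (y • P a ^ 2 + t • P a ^ 3)
      ((((Commute.refl (P a)).pow_right 2).smul_right y).add_right
        (((Commute.refl (P a)).pow_right 3).smul_right t))
      (fun s => by rw [hϑ, add_assoc]) x
  have hGy : ∀ (a : Fin A) (x y t : ℝ),
      MDeriv (fun s => NormedSpace.exp (ϑ (P a) x s t))
        (NormedSpace.exp (ϑ (P a) x y t) * P a ^ 2) y := by
    intro a x y t
    exact mderiv_exp' (P a ^ 2) (x • P a + t • P a ^ 3)
      ((((Commute.refl (P a)).pow_left 2).smul_right x).add_right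
        (((Commute.refl (P a)).pow_pow 2 3).smul_right t))
      (fun s => by rw [hϑ]; abel) y
  have hGt : ∀ (a : Fin A) (x y t : ℝ),
      MDeriv (fun s => NormedSpace.exp (ϑ (P a) x y s))
        (NormedSpace.exp (ϑ (P a) x y t) * P a ^ 3) t := by
    intro a x y t
    exact mderiv_exp' (P a ^ 3) (x • P a + y • P a ^ 2)
      ((((Commute.refl (P a)).pow_left 3).smul_right x).add_right
        (((Commute.refl (P a)).pow_pow 3 2).smul_right y))
      (fun s => by rw [hϑ]; abel) t
  have hFx : ∀ (b : Fin B) (x y t : ℝ),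
      MDeriv (fun s => NormedSpace.exp (-ϑ (Q b) s y t))
        (NormedSpace.exp (-ϑ (Q b) x y t) * -Q b) x := by
    intro b x y t
    exact mderiv_exp' (-Q b) (-(y • Q b ^ 2) - t • Q b ^ 3)
      (((((Commute.refl (Q b)).pow_right 2).smul_right y).neg_right.sub_right
        (((Commute.refl (Q b)).pow_right 3).smul_right t)).neg_left)
      (fun s => by rw [hϑ, smul_neg]; abel) x
  have hFy : ∀ (b : Fin B) (x y t : ℝ),
      MDeriv (fun s => NormedSpace.exp (-ϑ (Q b) x s t))
        (NormedSpace.exp (-ϑ (Q b) x y t) * -(Q b ^ 2)) y := by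
    intro b x y t
    exact mderiv_exp' (-(Q b ^ 2)) (-(x • Q b) - t • Q b ^ 3)
      (((((Commute.refl (Q b)).pow_left 2).smul_right x).neg_right.sub_right
        (((Commute.refl (Q b)).pow_pow 2 3).smul_right t)).neg_left)
      (fun s => by rw [hϑ, smul_neg]; abel) y
  have hFt : ∀ (b : Fin B) (x y t : ℝ),
      MDeriv (fun s => NormedSpace.exp (-ϑ (Q b) x y s))
        (NormedSpace.exp (-ϑ (Q b) x y t) * -(Q b ^ 3)) t := by
    intro b x y t
    exact mderiv_exp' (-(Q b ^ 3)) (-(x • Q b) - y • Q b ^ 2)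
      (((((Commute.refl (Q b)).pow_left 3).smul_right x).neg_right.sub_right
        (((Commute.refl (Q b)).pow_pow 3 2).smul_right y)).neg_left)
      (fun s => by rw [hϑ, smul_neg]; abel) t
  -- commutation of P a with its exponential
  have hcomm : ∀ (a : Fin A) (x y t : ℝ),
      Commute (P a) (NormedSpace.exp (ϑ (P a) x y t)) := by
    intro a x y t
    have hc : Commute (P a) (ϑ (P a) x y t) := by
      rw [hϑ]
      exact (((Commute.refl (P a)).smul_right x).add_right
        (((Commute.refl (P a)).pow_right 2).smul_right y)).add_right
        (((Commute.refl (P a)).pow_right 3).smul_right t)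
    exact hc.exp_right
  -- first derivatives of θ and χ
  have hθx : ∀ x y t, Dx θ x y t
      = ∑ a, θc a * (NormedSpace.exp (ϑ (P a) x y t) * P a) := by
    intro x y t
    exact Dx_eq (MDeriv.congr (fun s => hθ s y t)
      (MDeriv.sum fun a => MDeriv.const_mul (θc a) (hGx a x y t)))
  have hχx : ∀ x y t, Dx χ x y t
      = ∑ b, NormedSpace.exp (-ϑ (Q b) x y t) * -Q b * χc b := by
    intro x y t
    exact Dx_eq (MDeriv.congr (fun s => hχ s y t)
      (MDeriv.sum fun b => (hFx b x y t).mul_const (χc b)))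
  -- second derivatives
  have hθxx : ∀ x y t, Dx (Dx θ) x y t
      = ∑ a, θc a * (NormedSpace.exp (ϑ (P a) x y t) * P a * P a) := by
    intro x y t
    exact Dx_eq (MDeriv.congr (fun s => hθx s y t)
      (MDeriv.sum fun a => MDeriv.const_mul (θc a) ((hGx a x y t).mul_const (P a))))
  have hχxx : ∀ x y t, Dx (Dx χ) x y t
      = ∑ b, NormedSpace.exp (-ϑ (Q b) x y t) * -Q b * -Q b * χc b := by
    intro x y t
    exact Dx_eq (MDeriv.congr (fun s => hχx s y t)
      (MDeriv.sum fun b => ((hFx b x y t).mul_const (-Q b)).mul_const (χc b)))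
  refine ⟨fun x y t => ?_, fun x y t => ?_, fun x y t => ?_⟩
  · -- x derivative
    have hmain : MDeriv (fun s => Ω s y t)
        (∑ a, ∑ b,
          (NormedSpace.exp (-ϑ (Q b) x y t) * -Q b * W b a
              * NormedSpace.exp (ϑ (P a) x y t)
            + NormedSpace.exp (-ϑ (Q b) x y t) * W b a
              * (NormedSpace.exp (ϑ (P a) x y t) * P a))) x := by
      apply MDeriv.congr (fun s => hΩ s y t)
      exact MDeriv.const_add Ω₀ (MDeriv.sum fun a => MDeriv.sum fun b =>
        ((hFx b x y t).mul_const (W b a)).mul (hGx a x y t))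
    rw [Dx_eq hmain, hχ, hθ]
    simp only [Matrix.sum_mul, Matrix.mul_sum, Finset.sum_mul, Finset.mul_sum, ← Finset.sum_neg_distrib]
    refine Finset.sum_congr rfl fun a _ => Finset.sum_congr rfl fun b _ => ?_
    exact term_x _ _ _ _ _ _ _ _ (hcomm a x y t) (hW a b)
  · -- y derivative
    have hmain : MDeriv (fun s => Ω x s t)
        (∑ a, ∑ b,
          (NormedSpace.exp (-ϑ (Q b) x y t) * -(Q b ^ 2) * W b a
              * NormedSpace.exp (ϑ (P a) x y t)
            + NormedSpace.exp (-ϑ (Q b) x y t) * W b a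
              * (NormedSpace.exp (ϑ (P a) x y t) * P a ^ 2))) y := by
      apply MDeriv.congr (fun s => hΩ x s t)
      exact MDeriv.const_add Ω₀ (MDeriv.sum fun a => MDeriv.sum fun b =>
        ((hFy b x y t).mul_const (W b a)).mul (hGy a x y t))
    rw [Dy_eq hmain, hχ, hθ, hθx, hχx]
    simp only [Matrix.sum_mul, Matrix.mul_sum, Finset.sum_mul, Finset.mul_sum, ← Finset.sum_neg_distrib,
      ← Finset.sum_add_distrib]
    refine Finset.sum_congr rfl fun a _ => Finset.sum_congr rfl fun b _ => ?_
    exact term_y _ _ _ _ _ _ _ _ (hcomm a x y t) (hW a b)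
  · -- t derivative
    have hmain : MDeriv (fun s => Ω x y s)
        (∑ a, ∑ b,
          (NormedSpace.exp (-ϑ (Q b) x y t) * -(Q b ^ 3) * W b a
              * NormedSpace.exp (ϑ (P a) x y t)
            + NormedSpace.exp (-ϑ (Q b) x y t) * W b a
              * (NormedSpace.exp (ϑ (P a) x y t) * P a ^ 3))) t := by
      apply MDeriv.congr (fun s => hΩ x y s)
      exact MDeriv.const_add Ω₀ (MDeriv.sum fun a => MDeriv.sum fun b =>
        ((hFt b x y t).mul_const (W b a)).mul (hGt a x y t))
    rw [Dt_eq hmain, hχ, hθ, hθx, hχx, hθxx, hχxx]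
    simp only [Matrix.sum_mul, Matrix.mul_sum, Finset.sum_mul, Finset.mul_sum, ← Finset.sum_neg_distrib,
      ← Finset.sum_add_distrib, ← Finset.sum_sub_distrib]
    refine Finset.sum_congr rfl fun a _ => Finset.sum_congr rfl fun b _ => ?_
    exact term_t _ _ _ _ _ _ _ _ (hcomm a x y t) (hW a b)
end

section
/- (Proposition: expansion of τ and F for pure solitons.) In the pure-soliton setup with spectral parameters p_i = p_{i,1}, q_i = p_{i,2} (q_i ≠ p_j for all i,j), data ξ_i ∈ ℝ^m, η_i ∈ (ℝⁿ)ᵀ, and K an n×m real matrix, define w_{ij} = ((q_j−p_j)/(q_i−p_j)) η_i K ξ_j, the N×N matrix valued function Ω with entries Ω_{ij}(x,y,t) = δ_{ij} + w_{ij} e^{ϑ(p_j) − ϑ(q_i)}, the m×N matrix θ₁ with j-th column (q_j−p_j)ξ_j, the N×n matrix χ₁ with i-th row η_i, τ = e^{ϑ_{(2,…,2)}} det Ω, and F = − e^{ϑ_{(2,…,2)}} θ₁ diag(e^{ϑ(p_1)},…,e^{ϑ(p_N)}) adj(Ω) diag(e^{−ϑ(q_1)},…,e^{−ϑ(q_N)})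 χ₁, where adj denotes the adjugate matrix. Then there exist constants μ_I ∈ ℝ and constant m×n matrices M_I, for I ∈ {1,2}^N, such that τ = Σ_{I∈{1,2}^N} μ_I e^{ϑ_I} and F = Σ_{I∈{1,2}^N} M_I e^{ϑ_I} as functions on ℝ³, with μ_{(2,…,2)} = 1 and M_{(2,…,2)} = 0. -/
/-!
Put `c k a = e^{ϑ(pa k a)}`. Then `Ω = diag(e^{-ϑ(q_i)}) Bᵀ`, where row `k` of `B` is
`c k 0 • (column k of w) + c k 1 • eₖ`, so `τ = det B`. Multilinearity of the determinant in the
rows expands `det B` over the choices `I ∈ {1,2}^N`, the term of `I` carrying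
`∏ₖ c k (I k) = e^{ϑ_I}`. Likewise `e^{ϑ(p_i)}` times an adjugate entry of `B` is the determinant
of `B` with row `i` replaced by `c i 0 • eⱼ`, again a matrix of row combinations, which expands
`F`. For `I = (2,…,2)`, i.e. `fun _ => 1`, the first expansion picks `det 1 = 1` and the second
a matrix with a zero row.
-/

open Matrix

/-- `ϑ(p) = x p + y p² + t p³`. -/
noncomputable def th (p x y t : ℝ) : ℝ := x * p + y * p ^ 2 + t * p ^ 3

namespace Matrix

section RowCombination

variable {R ι α : Type*} [CommRing R]

def selectRows (v : ι → α → ι → R) (I : ι → α) : Matrix ι ι R :=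
  of fun k => v k (I k)

def rowComb [Fintype α] (c : ι → α → R) (v : ι → α → ι → R) : Matrix ι ι R :=
  of fun k => ∑ a, c k a • v k a

theorem det_rowComb [Fintype ι] [DecidableEq ι] [Fintype α] (c : ι → α → R)
    (v : ι → α → ι → R) :
    (rowComb c v).det = ∑ I : ι → α, (∏ k, c k (I k)) * (selectRows v I).det := by
  let f := (detRowAlternating : (ι → R) [⋀^ι]→ₗ[R] R).toMultilinearMap
  change f (fun k => ∑ a, c k a • v k a) = _
  rw [f.map_sum]
  refine Finset.sum_congr rfl fun I _ => ?_
  rw [f.map_smul_univ (fun k => c k (I k)) (fun k => v k (I k)), smul_eq_mul]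
  rfl

theorem updateRow_rowComb [DecidableEq ι] [Fintype α] [DecidableEq α] (c : ι → α → R)
    (v : ι → α → ι → R) (i : ι) (a₀ : α) (u : ι → R) :
    (rowComb c v).updateRow i (c i a₀ • u)
      = rowComb c (Function.update v i (Pi.single a₀ u)) := by
  ext k l
  by_cases hk : k = i
  · subst hk
    simp [rowComb, Pi.single_apply, ite_apply]
  · simp [rowComb, hk]

def adjugateTerm [Fintype ι] [DecidableEq ι] [DecidableEq α] (v : ι → α → ι → R) (a₀ : α) (I : ι → α) :
    Matrix ι ι R :=
  of fun i j => (selectRows (Function.update v i (Pi.single a₀ (Pi.single j 1))) I).det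

theorem diagonal_mul_adjugate_transpose_rowComb [Fintype ι] [DecidableEq ι] [Fintype α]
    [DecidableEq α] (c : ι → α → R) (v : ι → α → ι → R) (a₀ : α) :
    diagonal (fun i => c i a₀) * (rowComb c v)ᵀ.adjugate
      = ∑ I : ι → α, (∏ k, c k (I k)) • adjugateTerm v a₀ I := by
  rw [← adjugate_transpose]
  ext i j
  rw [diagonal_mul, transpose_apply, adjugate_apply, ← det_updateRow_smul, updateRow_rowComb,
    det_rowComb, sum_apply]
  simp [adjugateTerm, smul_eq_mul]

theorem adjugateTerm_eq_zero [Fintype ι] [DecidableEq ι] [DecidableEq α] (v : ι → α → ι → R)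
    {a₀ : α} {I : ι → α} (hI : ∀ i, I i ≠ a₀) :
    adjugateTerm v a₀ I = 0 := by
  ext i j
  simp only [adjugateTerm, of_apply, zero_apply]
  exact det_eq_zero_of_row_eq_zero i fun l => by simp [selectRows, hI i]

end RowCombination

section DiagonalScaling

variable {K ι : Type*} [Field K] [Fintype ι] [DecidableEq ι]

theorem prod_mul_det_diagonal_inv_mul {d : ι → K} (hd : ∀ i, d i ≠ 0) (A : Matrix ι ι K) :
    (∏ i, d i) * (diagonal (fun i => (d i)⁻¹) * A).det = A.det := by
  rw [det_mul, det_diagonal, ← mul_assoc, ← Finset.prod_mul_distrib]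
  simp [hd]

theorem prod_smul_adjugate_diagonal_inv_mul_mul {d : ι → K} (hd : ∀ i, d i ≠ 0)
    (A : Matrix ι ι K) :
    (∏ i, d i) • ((diagonal (fun i => (d i)⁻¹) * A).adjugate * diagonal (fun i => (d i)⁻¹))
      = A.adjugate := by
  rw [adjugate_mul_distrib, Matrix.mul_assoc, adjugate_mul, Matrix.mul_smul, Matrix.mul_one,
    smul_smul, det_diagonal, ← Finset.prod_mul_distrib]
  simp [hd]

end DiagonalScaling

section PureSoliton

variable {K ι : Type*} [Field K] [DecidableEq ι]

def solitonRows (w : Matrix ι ι K) : ι → Fin 2 → ι → K :=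
  fun k => ![wᵀ k, Pi.single k 1]

theorem selectRows_solitonRows_const_one (w : Matrix ι ι K) :
    selectRows (solitonRows w) (fun _ => 1) = 1 := by
  ext k l
  simp [selectRows, solitonRows, one_apply, Pi.single_apply, eq_comm]

theorem of_eq_diagonal_inv_mul_transpose_rowComb [Fintype ι] (w : Matrix ι ι K)
    {c : ι → Fin 2 → K} (hc : ∀ i, c i 1 ≠ 0) :
    (of fun i j => (if i = j then 1 else 0) + w i j * (c j 0 / c i 1))
      = diagonal (fun i => (c i 1)⁻¹) * (rowComb c (solitonRows w))ᵀ := by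
  ext i j
  by_cases hij : i = j
  · subst hij
    simp [rowComb, solitonRows, Fin.sum_univ_two, diagonal_mul]
    field_simp [hc i]
    ring
  · simp [rowComb, solitonRows, Fin.sum_univ_two, diagonal_mul, hij]
    field_simp

end PureSoliton

end Matrix

theorem stmt_5_general {m n N : ℕ}
    (p q : Fin N → ℝ)
    (pa : Fin N → Fin 2 → ℝ) (hpa : ∀ i, pa i 0 = p i ∧ pa i 1 = q i)
    (w : Fin N → Fin N → ℝ)
    (Ω : ℝ → ℝ → ℝ → Matrix (Fin N) (Fin N) ℝ)
    (hΩ : ∀ x y t, Ω x y t = Matrix.of fun i j =>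
      (if i = j then (1 : ℝ) else 0) + w i j * Real.exp (th (p j) x y t - th (q i) x y t))
    (θ₁ : Matrix (Fin m) (Fin N) ℝ)
    (χ₁ : Matrix (Fin N) (Fin n) ℝ)
    (τ : ℝ → ℝ → ℝ → ℝ)
    (hτ : ∀ x y t, τ x y t = Real.exp (∑ i, th (q i) x y t) * (Ω x y t).det)
    (F : ℝ → ℝ → ℝ → Matrix (Fin m) (Fin n) ℝ)
    (hF : ∀ x y t, F x y t = -(Real.exp (∑ i, th (q i) x y t)) •
      (θ₁ * Matrix.diagonal (fun i => Real.exp (th (p i) x y t))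
        * (Ω x y t).adjugate
        * Matrix.diagonal (fun i => Real.exp (-th (q i) x y t)) * χ₁)) :
    ∃ (μ : (Fin N → Fin 2) → ℝ) (M : (Fin N → Fin 2) → Matrix (Fin m) (Fin n) ℝ),
      μ (fun _ => 1) = 1 ∧ M (fun _ => 1) = 0 ∧
      (∀ x y t, τ x y t
        = ∑ I : Fin N → Fin 2, μ I * Real.exp (∑ i, th (pa i (I i)) x y t)) ∧
      (∀ x y t, F x y t
        = ∑ I : Fin N → Fin 2, Real.exp (∑ i, th (pa i (I i)) x y t) • M I) := by
  set v := solitonRows w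
  let c : ℝ → ℝ → ℝ → Fin N → Fin 2 → ℝ := fun x y t k a => Real.exp (th (pa k a) x y t)
  have hc0 : ∀ x y t k, c x y t k 0 = Real.exp (th (p k) x y t) := by simp [c, hpa]
  have hc1 : ∀ x y t k, c x y t k 1 = Real.exp (th (q k) x y t) := by simp [c, hpa]
  have hc1_ne : ∀ x y t k, c x y t k 1 ≠ 0 := fun x y t k => (Real.exp_pos _).ne'
  have hprod : ∀ x y t (I : Fin N → Fin 2),
      ∏ k, c x y t k (I k) = Real.exp (∑ k, th (pa k (I k)) x y t) := by
    simp [c, Real.exp_sum]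
  have hexp : ∀ x y t, Real.exp (∑ i, th (q i) x y t) = ∏ i, c x y t i 1 := by
    simp [Real.exp_sum, hc1]
  have hΩB : ∀ x y t,
      Ω x y t = diagonal (fun i => (c x y t i 1)⁻¹) * (rowComb (c x y t) v)ᵀ := fun x y t => by
    rw [hΩ, ← of_eq_diagonal_inv_mul_transpose_rowComb w (hc1_ne x y t)]
    simp [Real.exp_sub, hc0, hc1]
  refine ⟨fun I => (selectRows v I).det, fun I => -(θ₁ * adjugateTerm v 0 I * χ₁), ?_, ?_,
    fun x y t => ?_, fun x y t => ?_⟩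
  · exact (congrArg det (selectRows_solitonRows_const_one w)).trans det_one
  · simp [adjugateTerm_eq_zero v (a₀ := 0) (I := fun _ => 1) fun _ => one_ne_zero]
  · rw [hτ, hexp, hΩB, prod_mul_det_diagonal_inv_mul (hc1_ne x y t), det_transpose, det_rowComb]
    simp_rw [hprod, mul_comm]
  · calc F x y t
        = -(θ₁ * (diagonal (fun i => c x y t i 0) * (rowComb (c x y t) v)ᵀ.adjugate) * χ₁) := by
          rw [hF, hexp, hΩB]
          simp only [Real.exp_neg, ← hc0, ← hc1]
          rw [← prod_smul_adjugate_diagonal_inv_mul_mul (hc1_ne x y t) (rowComb (c x y t) v)ᵀ]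
          simp only [Matrix.mul_smul, Matrix.smul_mul, neg_smul, Matrix.mul_assoc]
      _ = _ := by
          rw [diagonal_mul_adjugate_transpose_rowComb, Matrix.mul_sum, Matrix.sum_mul,
            ← Finset.sum_neg_distrib]
          simp_rw [hprod, Matrix.mul_smul, Matrix.smul_mul, smul_neg]

/-- Expansion of `τ` and `F` for pure soliton solutions: both are linear combinations of
the exponentials `e^{ϑ_I}`, `I ∈ {1,2}^N`, with `μ_{(2,…,2)} = 1` and `M_{(2,…,2)} = 0`.
Here labels `1, 2` are encoded as `0, 1 : Fin 2`, with `pa i 0 = p i` and `pa i 1 = q i`. -/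
theorem stmt_5 {m n N : ℕ} (K : Matrix (Fin n) (Fin m) ℝ)
    (p q : Fin N → ℝ) (hpq : ∀ i j, q i ≠ p j)
    (ξ : Fin N → Fin m → ℝ) (η : Fin N → Fin n → ℝ)
    (pa : Fin N → Fin 2 → ℝ) (hpa : ∀ i, pa i 0 = p i ∧ pa i 1 = q i)
    (w : Fin N → Fin N → ℝ)
    (hw : ∀ i j, w i j = ((q j - p j) / (q i - p j)) * (η i ⬝ᵥ K.mulVec (ξ j)))
    (Ω : ℝ → ℝ → ℝ → Matrix (Fin N) (Fin N) ℝ)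
    (hΩ : ∀ x y t, Ω x y t = Matrix.of fun i j =>
      (if i = j then (1 : ℝ) else 0) + w i j * Real.exp (th (p j) x y t - th (q i) x y t))
    (θ₁ : Matrix (Fin m) (Fin N) ℝ) (hθ₁ : θ₁ = Matrix.of fun a j => (q j - p j) * ξ j a)
    (χ₁ : Matrix (Fin N) (Fin n) ℝ) (hχ₁ : χ₁ = Matrix.of fun i b => η i b)
    (τ : ℝ → ℝ → ℝ → ℝ)
    (hτ : ∀ x y t, τ x y t = Real.exp (∑ i, th (q i) x y t) * (Ω x y t).det)
    (F : ℝ → ℝ → ℝ → Matrix (Fin m) (Fin n) ℝ)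
    (hF : ∀ x y t, F x y t = -(Real.exp (∑ i, th (q i) x y t)) •
      (θ₁ * Matrix.diagonal (fun i => Real.exp (th (p i) x y t))
        * (Ω x y t).adjugate
        * Matrix.diagonal (fun i => Real.exp (-th (q i) x y t)) * χ₁)) :
    ∃ (μ : (Fin N → Fin 2) → ℝ) (M : (Fin N → Fin 2) → Matrix (Fin m) (Fin n) ℝ),
      μ (fun _ => 1) = 1 ∧ M (fun _ => 1) = 0 ∧
      (∀ x y t, τ x y t
        = ∑ I : Fin N → Fin 2, μ I * Real.exp (∑ i, th (pa i (I i)) x y t)) ∧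
      (∀ x y t, F x y t
        = ∑ I : Fin N → Fin 2, Real.exp (∑ i, th (pa i (I i)) x y t) • M I) :=
  stmt_5_general p q pa hpa w Ω hΩ θ₁ χ₁ τ hτ F hF
end

section
/- In the pure-soliton setup (q_i ≠ p_j for all i,j; Ω_{ij} = δ_{ij} + w_{ij} e^{ϑ(p_j)−ϑ(q_i)} with w_{ij} = ((q_j−p_j)/(q_i−p_j)) η_i K ξ_j; τ = e^{ϑ_{(2,…,2)}} det Ω; F = − e^{ϑ_{(2,…,2)}} θ₁ diag(e^{ϑ(p_i)}) adj(Ω) diag(e^{−ϑ(q_i)}) χ₁, where θ₁ has j-th column (q_j−p_j)ξ_j and χ₁ has i-th row η_i), the identity τ_x = p_{(2,…,2)} τ + tr(K F) holds as functions on ℝ³, where p_{(2,…,2)} = q₁ + ⋯ + q_N and τ_x denotes the partial derivative of τ with respect to x. -/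
open Matrix

/-! Since `∂ₓϑ(p) = p`, differentiating the prefactor `e^{ϑ_{(2,…,2)}}` of `τ` gives
`p_{(2,…,2)} τ`, and Jacobi's formula gives `∂ₓ det Ω = tr (adj Ω · Ωₓ)`. The factor
`(q_j - p_j) / (q_i - p_j)` in `w` is chosen so that the `p_j - q_i` produced by `∂ₓ` cancels,
leaving `Ωₓ = - diag(e^{-ϑ(q_i)}) χ₁ K θ₁ diag(e^{ϑ(p_j)})`; cyclicity of the trace then turns
`e^{ϑ_{(2,…,2)}} tr (adj Ω · Ωₓ)` into `tr (K F)`. -/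

section DetDeriv

variable {ι : Type*} [Fintype ι] [DecidableEq ι] {R : Type*} [CommRing R]

theorem Matrix.trace_adjugate_mul (A B : Matrix ι ι R) :
    (A.adjugate * B).trace = ∑ i, (A.updateCol i fun k => B k i).det := by
  refine Finset.sum_congr rfl fun i _ => ?_
  rw [diag_apply, ← cramer_apply, cramer_eq_adjugate_mulVec]
  simp [mul_apply, mulVec, dotProduct]

variable {𝕜 : Type*} [NontriviallyNormedField 𝕜]

theorem hasDerivAt_det_sum_updateCol {A : 𝕜 → Matrix ι ι 𝕜} {B : Matrix ι ι 𝕜} {x : 𝕜}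
    (hA : ∀ i j, HasDerivAt (fun s => A s i j) (B i j) x) :
    HasDerivAt (fun s => (A s).det) (∑ i, ((A x).updateCol i fun k => B k i).det) x := by
  have hterm (σ : Equiv.Perm ι) := ((HasDerivAt.fun_finsetProd (u := Finset.univ)
    fun i _ => hA (σ i) i).const_mul ((Equiv.Perm.sign σ : ℤ) : 𝕜))
  simp_rw [det_apply']
  refine (HasDerivAt.fun_sum fun σ (_ : σ ∈ Finset.univ) => hterm σ).congr_deriv ?_
  simp only [smul_eq_mul, Finset.mul_sum]
  rw [Finset.sum_comm]
  refine Finset.sum_congr rfl fun i _ => Finset.sum_congr rfl fun σ _ => ?_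
  rw [← Finset.mul_prod_erase Finset.univ _ (Finset.mem_univ i), updateCol_self,
    Finset.prod_congr rfl fun j hj => updateCol_ne (Finset.ne_of_mem_erase hj)]
  ring

theorem hasDerivAt_det {A : 𝕜 → Matrix ι ι 𝕜} {B : Matrix ι ι 𝕜} {x : 𝕜}
    (hA : ∀ i j, HasDerivAt (fun s => A s i j) (B i j) x) :
    HasDerivAt (fun s => (A s).det) ((A x).adjugate * B).trace x := by
  rw [trace_adjugate_mul]
  exact hasDerivAt_det_sum_updateCol hA

end DetDeriv

theorem Matrix.trace_mul_mul_cycle {R a b c d e f : Type*} [CommRing R] [Fintype a] [Fintype b]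
    [Fintype c] [Fintype d] [Fintype e] [Fintype f] (K : Matrix b a R) (θ : Matrix a c R)
    (P : Matrix c d R) (M : Matrix d e R) (Q : Matrix e f R) (χ : Matrix f b R) :
    (K * (θ * P * M * Q * χ)).trace = (M * (Q * (χ * K * θ) * P)).trace := by
  rw [trace_mul_comm K]
  simp only [Matrix.mul_assoc]
  rw [trace_mul_comm θ]
  simp only [Matrix.mul_assoc]
  rw [trace_mul_comm P]
  simp only [Matrix.mul_assoc]

theorem hasDerivAt_th (r y t x : ℝ) : HasDerivAt (fun s => th r s y t) r x := by
  simpa [th] using ((hasDerivAt_mul_const r).add_const (y * r ^ 2)).add_const (t * r ^ 3)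

theorem hasDerivAt_const_add_mul_exp_th_sub (c w a b y t x : ℝ) :
    HasDerivAt (fun s => c + w * Real.exp (th a s y t - th b s y t))
      (w * Real.exp (th a x y t - th b x y t) * (a - b)) x := by
  simpa [mul_assoc] using
    (((hasDerivAt_th a y t x).sub (hasDerivAt_th b y t x)).exp.const_mul w).const_add c

theorem diagonal_mul_mul_diagonal_eq_neg_w {m n N : ℕ} (K : Matrix (Fin n) (Fin m) ℝ)
    (p q : Fin N → ℝ) (hpq : ∀ i j, q i ≠ p j)
    (ξ : Fin N → Fin m → ℝ) (η : Fin N → Fin n → ℝ) (w : Fin N → Fin N → ℝ)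
    (hw : ∀ i j, w i j = ((q j - p j) / (q i - p j)) * (η i ⬝ᵥ K.mulVec (ξ j)))
    (θ₁ : Matrix (Fin m) (Fin N) ℝ) (hθ₁ : θ₁ = Matrix.of fun a j => (q j - p j) * ξ j a)
    (χ₁ : Matrix (Fin N) (Fin n) ℝ) (hχ₁ : χ₁ = Matrix.of fun i b => η i b) (u v : Fin N → ℝ) :
    diagonal u * (χ₁ * K * θ₁) * diagonal v = -of fun i j => w i j * (u i * v j) * (p j - q i) := by
  have hcore : χ₁ * K * θ₁ = of fun i j => (q j - p j) * (η i ⬝ᵥ K *ᵥ ξ j) := by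
    subst hθ₁ hχ₁
    ext i j
    rw [Matrix.mul_assoc]
    simp only [mul_apply, of_apply, dotProduct, mulVec, Finset.mul_sum]
    exact Finset.sum_congr rfl fun b _ => Finset.sum_congr rfl fun a _ => by ring
  ext i j
  have hqp : q i - p j ≠ 0 := sub_ne_zero.mpr (hpq i j)
  rw [mul_diagonal, diagonal_mul, hcore, Matrix.neg_apply, of_apply, of_apply, hw]
  field_simp
  ring

/-- In the pure-soliton setup, `τ_x = p_{(2,…,2)} τ + tr(K F)` holds,
where `p_{(2,…,2)} = q₁ + ⋯ + q_N`. -/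
theorem stmt_6 {m n N : ℕ} (K : Matrix (Fin n) (Fin m) ℝ)
    (p q : Fin N → ℝ) (hpq : ∀ i j, q i ≠ p j)
    (ξ : Fin N → Fin m → ℝ) (η : Fin N → Fin n → ℝ)
    (w : Fin N → Fin N → ℝ)
    (hw : ∀ i j, w i j = ((q j - p j) / (q i - p j)) * (η i ⬝ᵥ K.mulVec (ξ j)))
    (Ω : ℝ → ℝ → ℝ → Matrix (Fin N) (Fin N) ℝ)
    (hΩ : ∀ x y t, Ω x y t = Matrix.of fun i j =>
      (if i = j then (1 : ℝ) else 0) + w i j * Real.exp (th (p j) x y t - th (q i) x y t))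
    (θ₁ : Matrix (Fin m) (Fin N) ℝ) (hθ₁ : θ₁ = Matrix.of fun a j => (q j - p j) * ξ j a)
    (χ₁ : Matrix (Fin N) (Fin n) ℝ) (hχ₁ : χ₁ = Matrix.of fun i b => η i b)
    (τ : ℝ → ℝ → ℝ → ℝ)
    (hτ : ∀ x y t, τ x y t = Real.exp (∑ i, th (q i) x y t) * (Ω x y t).det)
    (F : ℝ → ℝ → ℝ → Matrix (Fin m) (Fin n) ℝ)
    (hF : ∀ x y t, F x y t = -(Real.exp (∑ i, th (q i) x y t)) •
      (θ₁ * Matrix.diagonal (fun i => Real.exp (th (p i) x y t))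
        * (Ω x y t).adjugate
        * Matrix.diagonal (fun i => Real.exp (-th (q i) x y t)) * χ₁)) :
    ∀ x y t, deriv (fun s => τ s y t) x
      = (∑ i, q i) * τ x y t + (K * F x y t).trace := by
  intro x y t
  set E := Real.exp (∑ i, th (q i) x y t)
  set Ωₓ : Matrix (Fin N) (Fin N) ℝ :=
    of fun i j => w i j * Real.exp (th (p j) x y t - th (q i) x y t) * (p j - q i)
  have hΩₓ : ∀ i j, HasDerivAt (fun s => Ω s y t i j) (Ωₓ i j) x := fun i j => by
    simp only [hΩ, of_apply]
    exact hasDerivAt_const_add_mul_exp_th_sub _ _ _ _ y t x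
  have hτₓ : HasDerivAt (fun s => τ s y t)
      (E * (∑ i, q i) * (Ω x y t).det + E * ((Ω x y t).adjugate * Ωₓ).trace) x := by
    simp only [hτ]
    exact (HasDerivAt.fun_sum fun i _ => hasDerivAt_th (q i) y t x).exp.mul (hasDerivAt_det hΩₓ)
  have hsandwich : diagonal (fun i => Real.exp (-th (q i) x y t)) * (χ₁ * K * θ₁)
      * diagonal (fun i => Real.exp (th (p i) x y t)) = -Ωₓ := by
    rw [diagonal_mul_mul_diagonal_eq_neg_w K p q hpq ξ η w hw θ₁ hθ₁ χ₁ hχ₁]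
    ext i j
    simp only [Ωₓ, Real.exp_sub, Real.exp_neg]
    field_simp
  have htrace : (K * F x y t).trace = E * ((Ω x y t).adjugate * Ωₓ).trace := by
    rw [hF, Matrix.mul_smul, trace_smul, trace_mul_mul_cycle, hsandwich, Matrix.mul_neg, trace_neg,
      smul_eq_mul, neg_mul_neg]
  rw [hτₓ.deriv, hτ, htrace]
  ring
end

section
/- Let K be a real n×m matrix, ξ₁, ξ₂ ∈ ℝ^m column vectors, η₁, η₂ row vectors in ℝⁿ, and p₁,p₂,q₁,q₂ real numbers with p₁≠q₁, p₂≠q₂, q₁≠p₂, q₂≠p₁. Set κ_{ij} = η_i K ξ_j, assume κ_{11} ≠ 0, κ_{22} ≠ 0, and assume α := 1 − ((q₁−p₁)(q₂−p₂) κ_{12} κ_{21})/((q₁−p₂)(q₂−p₁) κ_{11} κ_{22}) ≠ 0. Define the m×n matrices φ_{11} = ((q₁−p₁)(q₂−p₂)/(α κ_{11} κ_{22})) · ( (κ_{22}/(p₂−q₂)) ξ₁⊗η₁ + (κ_{11}/(p₁−q₁)) ξ₂⊗η₂ + (κ_{12}/(q₁−p₂)) ξ₁⊗η₂ + (κ_{21}/(q₂−p₁))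 ξ₂⊗η₁ ), φ_{12} = (p₁−q₁) ξ₁⊗η₁/κ_{11}, φ_{21} = (p₂−q₂) ξ₂⊗η₂/κ_{22}, φ_{22} = 0. Then these matrices satisfy (1 + tr( K(φ_{12}−φ_{22}) K(φ_{21}−φ_{22}) / ((q₁−p₂)(p₁−q₂)) )) (φ_{11}−φ_{22}) − (φ_{12}−φ_{22}) K (φ_{21}−φ_{22})/(q₁−p₂) + (φ_{21}−φ_{22}) K (φ_{12}−φ_{22})/(p₁−q₂) − (φ_{12}−φ_{22}) − (φ_{21}−φ_{22}) = 0. -/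
open Matrix


lemma vmv_mul_vmv {m n : ℕ} (K : Matrix (Fin n) (Fin m) ℝ)
    (a : Fin m → ℝ) (b : Fin n → ℝ) (c : Fin m → ℝ) (d : Fin n → ℝ) :
    vecMulVec a b * K * vecMulVec c d = (b ⬝ᵥ K.mulVec c) • vecMulVec a d := by
  ext i j
  simp only [Matrix.mul_apply, vecMulVec_apply, Matrix.smul_apply, smul_eq_mul,
    dotProduct, Matrix.mulVec, Finset.sum_mul, Finset.mul_sum]
  rw [Finset.sum_comm]
  refine Finset.sum_congr rfl fun k _ => Finset.sum_congr rfl fun l _ => by ring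

lemma trace_K_vmv {m n : ℕ} (K : Matrix (Fin n) (Fin m) ℝ)
    (a : Fin m → ℝ) (d : Fin n → ℝ) :
    (K * vecMulVec a d).trace = d ⬝ᵥ K.mulVec a := by
  simp only [Matrix.trace, Matrix.diag, Matrix.mul_apply, vecMulVec_apply,
    dotProduct, Matrix.mulVec, Finset.mul_sum]
  refine Finset.sum_congr rfl fun k _ => Finset.sum_congr rfl fun l _ => by ring

lemma trace_K_vmv_K_vmv {m n : ℕ} (K : Matrix (Fin n) (Fin m) ℝ)
    (a : Fin m → ℝ) (b : Fin n → ℝ) (c : Fin m → ℝ) (d : Fin n → ℝ) :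
    (K * vecMulVec a b * K * vecMulVec c d).trace
      = (b ⬝ᵥ K.mulVec c) * (d ⬝ᵥ K.mulVec a) := by
  rw [Matrix.mul_assoc, Matrix.mul_assoc, ← Matrix.mul_assoc (vecMulVec a b),
    vmv_mul_vmv, Matrix.mul_smul, Matrix.trace_smul, trace_K_vmv]
  simp [smul_eq_mul]

/-- The tropical values `φ_{ab}` of a pure 2-soliton solution of pKP_K satisfy the
nonlinear quadrilateral equation (3.1) of the paper. Here `ξ⊗η = vecMulVec ξ η`. -/
theorem stmt_9 {m n : ℕ} (K : Matrix (Fin n) (Fin m) ℝ)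
    (ξ₁ ξ₂ : Fin m → ℝ) (η₁ η₂ : Fin n → ℝ)
    (p₁ p₂ q₁ q₂ : ℝ)
    (h1 : p₁ ≠ q₁) (h2 : p₂ ≠ q₂) (h3 : q₁ ≠ p₂) (h4 : q₂ ≠ p₁)
    (κ₁₁ κ₁₂ κ₂₁ κ₂₂ : ℝ)
    (hκ₁₁ : κ₁₁ = η₁ ⬝ᵥ K.mulVec ξ₁) (hκ₁₂ : κ₁₂ = η₁ ⬝ᵥ K.mulVec ξ₂)
    (hκ₂₁ : κ₂₁ = η₂ ⬝ᵥ K.mulVec ξ₁) (hκ₂₂ : κ₂₂ = η₂ ⬝ᵥ K.mulVec ξ₂)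
    (hκ11 : κ₁₁ ≠ 0) (hκ22 : κ₂₂ ≠ 0)
    (α : ℝ)
    (hα : α = 1 - ((q₁ - p₁) * (q₂ - p₂) * κ₁₂ * κ₂₁)
      / ((q₁ - p₂) * (q₂ - p₁) * κ₁₁ * κ₂₂))
    (hα0 : α ≠ 0)
    (φ₁₁ φ₁₂ φ₂₁ φ₂₂ : Matrix (Fin m) (Fin n) ℝ)
    (hφ₁₁ : φ₁₁ = ((q₁ - p₁) * (q₂ - p₂) / (α * κ₁₁ * κ₂₂)) •
      ((κ₂₂ / (p₂ - q₂)) • vecMulVec ξ₁ η₁ + (κ₁₁ / (p₁ - q₁)) • vecMulVec ξ₂ η₂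
        + (κ₁₂ / (q₁ - p₂)) • vecMulVec ξ₁ η₂ + (κ₂₁ / (q₂ - p₁)) • vecMulVec ξ₂ η₁))
    (hφ₁₂ : φ₁₂ = ((p₁ - q₁) / κ₁₁) • vecMulVec ξ₁ η₁)
    (hφ₂₁ : φ₂₁ = ((p₂ - q₂) / κ₂₂) • vecMulVec ξ₂ η₂)
    (hφ₂₂ : φ₂₂ = 0) :
    (1 + (K * (φ₁₂ - φ₂₂) * K * (φ₂₁ - φ₂₂)).trace / ((q₁ - p₂) * (p₁ - q₂)))
        • (φ₁₁ - φ₂₂)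
      - ((q₁ - p₂)⁻¹) • ((φ₁₂ - φ₂₂) * K * (φ₂₁ - φ₂₂))
      + ((p₁ - q₂)⁻¹) • ((φ₂₁ - φ₂₂) * K * (φ₁₂ - φ₂₂))
      - (φ₁₂ - φ₂₂) - (φ₂₁ - φ₂₂) = 0 := by
  subst hφ₂₂ hφ₁₁ hφ₁₂ hφ₂₁
  have hq1 : q₁ - p₂ ≠ 0 := sub_ne_zero.mpr h3
  have hq2 : q₂ - p₁ ≠ 0 := sub_ne_zero.mpr h4
  have hp1 : p₁ - q₁ ≠ 0 := sub_ne_zero.mpr h1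
  have hp2 : p₂ - q₂ ≠ 0 := sub_ne_zero.mpr h2
  have hp1' : p₁ - q₂ ≠ 0 := fun h => h4 (by linarith [sub_eq_zero.mp h])
  have hS : 1 + (p₂ - q₂) / κ₂₂ * ((p₁ - q₁) / κ₁₁) * (κ₁₂ * κ₂₁) / ((q₁ - p₂) * (p₁ - q₂)) = α := by
    rw [hα]; field_simp; ring
  simp only [sub_zero, Matrix.smul_mul, Matrix.mul_smul, vmv_mul_vmv,
    trace_K_vmv_K_vmv, trace_smul, smul_smul, smul_eq_mul,
    ← hκ₁₁, ← hκ₁₂, ← hκ₂₁, ← hκ₂₂]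
  match_scalars <;> rw [hS] <;> field_simp <;> ring
end

section
/- Let K be a real n×m matrix, ξ₁, ξ₂ ∈ ℝ^m, η₁, η₂ row vectors in ℝⁿ, and p₁,p₂,q₁,q₂ real numbers with p₁≠q₁, p₂≠q₂, q₁≠p₂, q₂≠p₁, p₁≠p₂, q₁≠q₂. Set κ_{ij} = η_i K ξ_j, assume κ_{11}, κ_{22} ≠ 0 and α := 1 − ((q₁−p₁)(q₂−p₂)κ_{12}κ_{21})/((q₁−p₂)(q₂−p₁)κ_{11}κ_{22}) ≠ 0. Define u_{1,in} = α⁻¹ (1_m − ((q₂−p₂)/(q₂−p₁)) (ξ₂⊗η₂/κ_{22}) K) (ξ₁⊗η₁/κ_{11}) (1_n − ((q₂−p₂)/(q₁−p₂)) K (ξ₂⊗η₂/κ_{22})), u_{2,in} = ξ₂⊗η₂/κ_{22}, u_{1,out} = ξ₁⊗η₁/κ_{11}, u_{2,out} = α⁻¹ (1_m − ((q₁−p₁)/(q₁−p₂)) (ξ₁⊗η₁/κ_{11}) K) (ξ₂⊗η₂/κ_{22}) (1_n − ((q₁−p₁)/(q₂−p₁)) K (ξ₁⊗η₁/κ_{11})),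 and α_in = 1 − ((p₁−q₁)(p₂−q₂)/((p₁−p₂)(q₁−q₂))) tr(K u_{1,in} K u_{2,in}). Then α · α_in = 1, and moreover u_{1,out} = α_in⁻¹ (1_m − ((q₂−p₂)/(p₁−p₂)) u_{2,in} K) u_{1,in} (1_n − ((p₂−q₂)/(q₁−q₂)) K u_{2,in}) and u_{2,out} = α_in⁻¹ (1_m − ((q₁−p₁)/(q₁−q₂)) u_{1,in} K) u_{2,in} (1_n − ((p₁−q₁)/(p₁−p₂)) K u_{1,in}). -/
open Matrix

lemma key {m n : ℕ} (K : Matrix (Fin n) (Fin m) ℝ) (ξ ξ' : Fin m → ℝ) (η η' : Fin n → ℝ) :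
    vecMulVec ξ η * (K * vecMulVec ξ' η') = (η ⬝ᵥ K.mulVec ξ') • vecMulVec ξ η' := by
  ext i j
  simp only [mul_apply, vecMulVec_apply, mulVec, dotProduct, smul_eq_mul, Matrix.smul_apply,
    Finset.mul_sum, Finset.sum_mul]
  apply Finset.sum_congr rfl; intro a _
  apply Finset.sum_congr rfl; intro b _
  ring

lemma key2 {m n k : ℕ} (K : Matrix (Fin n) (Fin m) ℝ) (ξ ξ' : Fin m → ℝ) (η η' : Fin n → ℝ)
    (X : Matrix (Fin n) (Fin k) ℝ) :
    vecMulVec ξ η * (K * (vecMulVec ξ' η' * X)) = (η ⬝ᵥ K.mulVec ξ') • (vecMulVec ξ η' * X) := by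
  rw [← Matrix.mul_assoc, ← Matrix.mul_assoc, Matrix.mul_assoc _ K, key, Matrix.smul_mul]

lemma keytr {m n : ℕ} (K : Matrix (Fin n) (Fin m) ℝ) (ξ : Fin m → ℝ) (η : Fin n → ℝ) :
    (K * vecMulVec ξ η).trace = η ⬝ᵥ K.mulVec ξ := by
  simp only [trace, mul_apply, vecMulVec_apply, mulVec, dotProduct, diag_apply, Finset.mul_sum]
  apply Finset.sum_congr rfl; intro a _
  apply Finset.sum_congr rfl; intro b _
  ring

set_option maxHeartbeats 4000000 in
/-- The 2-soliton Yang–Baxter map: the outgoing polarizations are given in terms of the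
incoming ones by the stated nonlinear map, and `α · α_in = 1`. -/
theorem stmt_10 {m n : ℕ} (K : Matrix (Fin n) (Fin m) ℝ)
    (ξ₁ ξ₂ : Fin m → ℝ) (η₁ η₂ : Fin n → ℝ)
    (p₁ p₂ q₁ q₂ : ℝ)
    (h1 : p₁ ≠ q₁) (h2 : p₂ ≠ q₂) (h3 : q₁ ≠ p₂) (h4 : q₂ ≠ p₁)
    (h5 : p₁ ≠ p₂) (h6 : q₁ ≠ q₂)
    (κ₁₁ κ₁₂ κ₂₁ κ₂₂ : ℝ)
    (hκ₁₁ : κ₁₁ = η₁ ⬝ᵥ K.mulVec ξ₁) (hκ₁₂ : κ₁₂ = η₁ ⬝ᵥ K.mulVec ξ₂)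
    (hκ₂₁ : κ₂₁ = η₂ ⬝ᵥ K.mulVec ξ₁) (hκ₂₂ : κ₂₂ = η₂ ⬝ᵥ K.mulVec ξ₂)
    (hκ11 : κ₁₁ ≠ 0) (hκ22 : κ₂₂ ≠ 0)
    (α : ℝ)
    (hα : α = 1 - ((q₁ - p₁) * (q₂ - p₂) * κ₁₂ * κ₂₁)
      / ((q₁ - p₂) * (q₂ - p₁) * κ₁₁ * κ₂₂))
    (hα0 : α ≠ 0)
    (u₁in u₂in u₁out u₂out : Matrix (Fin m) (Fin n) ℝ)
    (hu₁in : u₁in = α⁻¹ •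
      ((1 - ((q₂ - p₂) / (q₂ - p₁)) • (κ₂₂⁻¹ • vecMulVec ξ₂ η₂ * K))
        * (κ₁₁⁻¹ • vecMulVec ξ₁ η₁)
        * (1 - ((q₂ - p₂) / (q₁ - p₂)) • (K * κ₂₂⁻¹ • vecMulVec ξ₂ η₂))))
    (hu₂in : u₂in = κ₂₂⁻¹ • vecMulVec ξ₂ η₂)
    (hu₁out : u₁out = κ₁₁⁻¹ • vecMulVec ξ₁ η₁)
    (hu₂out : u₂out = α⁻¹ •
      ((1 - ((q₁ - p₁) / (q₁ - p₂)) • (κ₁₁⁻¹ • vecMulVec ξ₁ η₁ * K))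
        * (κ₂₂⁻¹ • vecMulVec ξ₂ η₂)
        * (1 - ((q₁ - p₁) / (q₂ - p₁)) • (K * κ₁₁⁻¹ • vecMulVec ξ₁ η₁))))
    (αin : ℝ)
    (hαin : αin = 1 - ((p₁ - q₁) * (p₂ - q₂) / ((p₁ - p₂) * (q₁ - q₂)))
      * (K * u₁in * K * u₂in).trace) :
    α * αin = 1 ∧
    u₁out = αin⁻¹ •
      ((1 - ((q₂ - p₂) / (p₁ - p₂)) • (u₂in * K)) * u₁in
        * (1 - ((p₂ - q₂) / (q₁ - q₂)) • (K * u₂in))) ∧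
    u₂out = αin⁻¹ •
      ((1 - ((q₁ - p₁) / (q₁ - q₂)) • (u₁in * K)) * u₂in
        * (1 - ((p₁ - q₁) / (p₁ - p₂)) • (K * u₁in))) := by
  have hd1 : q₂ - p₁ ≠ 0 := sub_ne_zero.mpr h4
  have hd2 : q₁ - p₂ ≠ 0 := sub_ne_zero.mpr h3
  have hd3 : p₁ - p₂ ≠ 0 := sub_ne_zero.mpr h5
  have hd4 : q₁ - q₂ ≠ 0 := sub_ne_zero.mpr h6
  have hYX : (q₁ - p₂) * (q₂ - p₁) * κ₁₁ * κ₂₂ - (q₁ - p₁) * (q₂ - p₂) * κ₁₂ * κ₂₁ ≠ 0 := by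
    intro h
    apply hα0
    rw [hα]
    field_simp
    linarith
  have hαval : α = ((q₁ - p₂) * (q₂ - p₁) * κ₁₁ * κ₂₂ - (q₁ - p₁) * (q₂ - p₂) * κ₁₂ * κ₂₁)
      / ((q₁ - p₂) * (q₂ - p₁) * κ₁₁ * κ₂₂) := by
    rw [hα]; field_simp
  simp only [Matrix.mul_sub, Matrix.sub_mul, Matrix.mul_add, Matrix.add_mul, Matrix.mul_one,
    Matrix.one_mul, Matrix.smul_mul, Matrix.mul_smul, Matrix.mul_assoc, key, key2,
    smul_smul, smul_sub, smul_add, ← hκ₁₁, ← hκ₁₂, ← hκ₂₁, ← hκ₂₂] at hu₁in hu₂out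
  have htr : (K * u₁in * K * u₂in).trace
      = α⁻¹ * (((p₂ - p₁) * (q₁ - q₂) * κ₁₂ * κ₂₁) / ((q₂ - p₁) * (q₁ - p₂) * κ₁₁ * κ₂₂)) := by
    rw [hu₁in, hu₂in]
    simp only [Matrix.mul_sub, Matrix.sub_mul, Matrix.mul_add, Matrix.add_mul, Matrix.mul_one,
      Matrix.one_mul, Matrix.smul_mul, Matrix.mul_smul, Matrix.mul_assoc, key, key2,
      smul_smul, smul_sub, smul_add, trace_sub, trace_add, trace_smul, keytr, smul_eq_mul,
      ← hκ₁₁, ← hκ₁₂, ← hκ₂₁, ← hκ₂₂]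
    field_simp
    ring
  have hA : α * αin = 1 := by
    rw [hαin, htr, hαval]
    field_simp
    ring
  have hαin0 : αin ≠ 0 := right_ne_zero_of_mul_eq_one hA
  have hinv : αin⁻¹ = α := inv_eq_of_mul_eq_one_left hA
  have hAI : α * α⁻¹ = 1 := mul_inv_cancel₀ hα0
  have h22 : κ₂₂ * κ₂₂⁻¹ = 1 := mul_inv_cancel₀ hκ22
  refine ⟨hA, ?_, ?_⟩
  · rw [hu₁out, hinv, hu₁in, hu₂in]
    simp only [Matrix.mul_sub, Matrix.sub_mul, Matrix.mul_add, Matrix.add_mul, Matrix.mul_one,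
      Matrix.one_mul, Matrix.smul_mul, Matrix.mul_smul, Matrix.mul_assoc, key, key2,
      smul_smul, smul_sub, smul_add, ← hκ₁₁, ← hκ₁₂, ← hκ₂₁, ← hκ₂₂]
    set s := (q₂ - p₂) / (q₂ - p₁) with hs
    set t := (q₂ - p₂) / (q₁ - p₂) with ht
    set u := (q₂ - p₂) / (p₁ - p₂) with hu
    set v := (p₂ - q₂) / (q₁ - q₂) with hv
    have huu : u * (1 - s) = -s := by rw [hu, hs]; field_simp; try ring
    have hvv : v * (1 - t) = -t := by rw [hv, ht]; field_simp; try ring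
    match_scalars
    · linear_combination (-κ₁₁⁻¹) * hAI
    · linear_combination (κ₁₁⁻¹*κ₂₂⁻¹*κ₂₁*u + κ₁₁⁻¹*κ₂₂⁻¹*κ₂₁*s - κ₁₁⁻¹*κ₂₂⁻¹*κ₂₂⁻¹*κ₂₂*κ₂₁*s*u) * hAI + (-κ₁₁⁻¹*κ₂₂⁻¹*κ₂₁*s*u) * h22 + (κ₁₁⁻¹*κ₂₂⁻¹*κ₂₁) * huu
    · linear_combination (κ₁₁⁻¹*κ₂₂⁻¹*κ₁₂*v + κ₁₁⁻¹*κ₂₂⁻¹*κ₁₂*t - κ₁₁⁻¹*κ₂₂⁻¹*κ₂₂⁻¹*κ₂₂*κ₁₂*t*v) * hAI + (-κ₁₁⁻¹*κ₂₂⁻¹*κ₁₂*t*v) * h22 + (κ₁₁⁻¹*κ₂₂⁻¹*κ₁₂) * hvv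
    · linear_combination (-κ₁₁⁻¹*κ₂₂⁻¹*κ₂₂⁻¹*κ₁₂*κ₂₁*u*v - κ₁₁⁻¹*κ₂₂⁻¹*κ₂₂⁻¹*κ₁₂*κ₂₁*t*u - κ₁₁⁻¹*κ₂₂⁻¹*κ₂₂⁻¹*κ₁₂*κ₂₁*s*v - κ₁₁⁻¹*κ₂₂⁻¹*κ₂₂⁻¹*κ₁₂*κ₂₁*s*t + κ₁₁⁻¹*κ₂₂⁻¹*κ₂₂⁻¹*κ₂₂⁻¹*κ₂₂*κ₁₂*κ₂₁*t*u*v + κ₁₁⁻¹*κ₂₂⁻¹*κ₂₂⁻¹*κ₂₂⁻¹*κ₂₂*κ₁₂*κ₂₁*s*u*v + κ₁₁⁻¹*κ₂₂⁻¹*κ₂₂⁻¹*κ₂₂⁻¹*κ₂₂*κ₁₂*κ₂₁*s*t*v + κ₁₁⁻¹*κ₂₂⁻¹*κ₂₂⁻¹*κ₂₂⁻¹*κ₂₂*κ₁₂*κ₂₁*s*t*u - κ₁₁⁻¹*κ₂₂⁻¹*κ₂₂⁻¹*κ₂₂⁻¹*κ₂₂⁻¹*κ₂₂*κ₂₂*κ₁₂*κ₂₁*s*t*u*v)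 * hAI + (κ₁₁⁻¹*κ₂₂⁻¹*κ₂₂⁻¹*κ₁₂*κ₂₁*t*u*v + κ₁₁⁻¹*κ₂₂⁻¹*κ₂₂⁻¹*κ₁₂*κ₂₁*s*u*v + κ₁₁⁻¹*κ₂₂⁻¹*κ₂₂⁻¹*κ₁₂*κ₂₁*s*t*v + κ₁₁⁻¹*κ₂₂⁻¹*κ₂₂⁻¹*κ₁₂*κ₂₁*s*t*u - κ₁₁⁻¹*κ₂₂⁻¹*κ₂₂⁻¹*κ₁₂*κ₂₁*s*t*u*v - κ₁₁⁻¹*κ₂₂⁻¹*κ₂₂⁻¹*κ₂₂⁻¹*κ₂₂*κ₁₂*κ₂₁*s*t*u*v) * h22 + (-κ₁₁⁻¹*κ₂₂⁻¹*κ₂₂⁻¹*κ₁₂*κ₂₁*v - κ₁₁⁻¹*κ₂₂⁻¹*κ₂₂⁻¹*κ₁₂*κ₂₁*t + κ₁₁⁻¹*κ₂₂⁻¹*κ₂₂⁻¹*κ₁₂*κ₂₁*t*v) * huu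
  · rw [hu₂out, hinv, hu₁in, hu₂in]
    apply smul_right_injective (Matrix (Fin m) (Fin n) ℝ) hα0
    simp only [Matrix.mul_sub, Matrix.sub_mul, Matrix.mul_add, Matrix.add_mul, Matrix.mul_one,
      Matrix.one_mul, Matrix.smul_mul, Matrix.mul_smul, Matrix.mul_assoc, key, key2,
      smul_smul, smul_sub, smul_add, ← hκ₁₁, ← hκ₁₂, ← hκ₂₁, ← hκ₂₂]
    set s := (q₂ - p₂) / (q₂ - p₁) with hs
    set t := (q₂ - p₂) / (q₁ - p₂) with ht
    set a := (q₁ - p₁) / (q₁ - p₂) with ha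
    set b := (q₁ - p₁) / (q₂ - p₁) with hb
    set c := (q₁ - p₁) / (q₁ - q₂) with hc
    set d := (p₁ - q₁) / (p₁ - p₂) with hd
    have hαr : α = 1 - a * s * (κ₁₂ * κ₂₁ * (κ₁₁⁻¹ * κ₂₂⁻¹)) := by
      rw [hα, ha, hs]; field_simp; try ring
    have hct : a = c * (1 - t) := by rw [ha, hc, ht]; field_simp; try ring
    have hds : b = d * (1 - s) := by rw [hb, hd, hs]; field_simp; try ring
    have hR : d * t * (1 - s) = c * s * (1 - t) := by rw [hd, ht, hs, hc]; field_simp; try ring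
    match_scalars
    · linear_combination (κ₂₂⁻¹ - κ₁₁⁻¹*κ₁₁⁻¹*κ₂₂⁻¹*κ₂₂⁻¹*κ₂₂⁻¹*κ₁₂*κ₁₂*κ₂₁*κ₂₁*s*t*c*d + κ₁₁⁻¹*κ₁₁⁻¹*κ₂₂⁻¹*κ₂₂⁻¹*κ₂₂⁻¹*κ₂₂⁻¹*κ₂₂*κ₁₂*κ₁₂*κ₂₁*κ₂₁*s*t*t*c*d + κ₁₁⁻¹*κ₁₁⁻¹*κ₂₂⁻¹*κ₂₂⁻¹*κ₂₂⁻¹*κ₂₂⁻¹*κ₂₂*κ₁₂*κ₁₂*κ₂₁*κ₂₁*s*s*t*c*d - κ₁₁⁻¹*κ₁₁⁻¹*κ₂₂⁻¹*κ₂₂⁻¹*κ₂₂⁻¹*κ₂₂⁻¹*κ₂₂⁻¹*κ₂₂*κ₂₂*κ₁₂*κ₁₂*κ₂₁*κ₂₁*s*s*t*t*c*d - α*κ₁₁⁻¹*κ₂₂⁻¹*κ₂₂⁻¹*κ₁₂*κ₂₁*t*d - α*κ₁₁⁻¹*κ₂₂⁻¹*κ₂₂⁻¹*κ₁₂*κ₂₁*s*c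 + α*κ₁₁⁻¹*κ₂₂⁻¹*κ₂₂⁻¹*κ₂₂⁻¹*κ₂₂*κ₁₂*κ₂₁*s*t*d + α*κ₁₁⁻¹*κ₂₂⁻¹*κ₂₂⁻¹*κ₂₂⁻¹*κ₂₂*κ₁₂*κ₂₁*s*t*c - α*α⁻¹*κ₁₁⁻¹*κ₁₁⁻¹*κ₂₂⁻¹*κ₂₂⁻¹*κ₂₂⁻¹*κ₁₂*κ₁₂*κ₂₁*κ₂₁*s*t*c*d + α*α⁻¹*κ₁₁⁻¹*κ₁₁⁻¹*κ₂₂⁻¹*κ₂₂⁻¹*κ₂₂⁻¹*κ₂₂⁻¹*κ₂₂*κ₁₂*κ₁₂*κ₂₁*κ₂₁*s*t*t*c*d + α*α⁻¹*κ₁₁⁻¹*κ₁₁⁻¹*κ₂₂⁻¹*κ₂₂⁻¹*κ₂₂⁻¹*κ₂₂⁻¹*κ₂₂*κ₁₂*κ₁₂*κ₂₁*κ₂₁*s*s*t*c*d - α*α⁻¹*κ₁₁⁻¹*κ₁₁⁻¹*κ₂₂⁻¹*κ₂₂⁻¹*κ₂₂⁻¹*κ₂₂⁻¹*κ₂₂⁻¹*κ₂₂*κ₂₂*κ₁₂*κ₁₂*κ₂₁*κ₂₁*s*s*t*t*c*d)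 * hAI + (κ₁₁⁻¹*κ₁₁⁻¹*κ₂₂⁻¹*κ₂₂⁻¹*κ₂₂⁻¹*κ₁₂*κ₁₂*κ₂₁*κ₂₁*s*t*t*c*d + κ₁₁⁻¹*κ₁₁⁻¹*κ₂₂⁻¹*κ₂₂⁻¹*κ₂₂⁻¹*κ₁₂*κ₁₂*κ₂₁*κ₂₁*s*s*t*c*d - κ₁₁⁻¹*κ₁₁⁻¹*κ₂₂⁻¹*κ₂₂⁻¹*κ₂₂⁻¹*κ₁₂*κ₁₂*κ₂₁*κ₂₁*s*s*t*t*c*d - κ₁₁⁻¹*κ₁₁⁻¹*κ₂₂⁻¹*κ₂₂⁻¹*κ₂₂⁻¹*κ₂₂⁻¹*κ₂₂*κ₁₂*κ₁₂*κ₂₁*κ₂₁*s*s*t*t*c*d + α*κ₁₁⁻¹*κ₂₂⁻¹*κ₂₂⁻¹*κ₁₂*κ₂₁*s*t*d + α*κ₁₁⁻¹*κ₂₂⁻¹*κ₂₂⁻¹*κ₁₂*κ₂₁*s*t*c) * h22 + (-κ₂₂⁻¹ - κ₁₁⁻¹*κ₂₂⁻¹*κ₂₂⁻¹*κ₁₂*κ₂₁*t*d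 - κ₁₁⁻¹*κ₂₂⁻¹*κ₂₂⁻¹*κ₁₂*κ₂₁*s*c + κ₁₁⁻¹*κ₂₂⁻¹*κ₂₂⁻¹*κ₁₂*κ₂₁*s*a + κ₁₁⁻¹*κ₂₂⁻¹*κ₂₂⁻¹*κ₁₂*κ₂₁*s*t*d + κ₁₁⁻¹*κ₂₂⁻¹*κ₂₂⁻¹*κ₁₂*κ₂₁*s*t*c - α*κ₂₂⁻¹) * hαr + (2*κ₁₁⁻¹*κ₂₂⁻¹*κ₂₂⁻¹*κ₁₂*κ₂₁*s + κ₁₁⁻¹*κ₁₁⁻¹*κ₂₂⁻¹*κ₂₂⁻¹*κ₂₂⁻¹*κ₁₂*κ₁₂*κ₂₁*κ₂₁*s*t*d - κ₁₁⁻¹*κ₁₁⁻¹*κ₂₂⁻¹*κ₂₂⁻¹*κ₂₂⁻¹*κ₁₂*κ₁₂*κ₂₁*κ₂₁*s*s*a - κ₁₁⁻¹*κ₁₁⁻¹*κ₂₂⁻¹*κ₂₂⁻¹*κ₂₂⁻¹*κ₁₂*κ₁₂*κ₂₁*κ₂₁*s*s*t*d) * hct + (-κ₁₁⁻¹*κ₂₂⁻¹*κ₂₂⁻¹*κ₁₂*κ₂₁)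 * hR
    · linear_combination (-κ₁₁⁻¹*κ₂₂⁻¹*κ₁₂*a + κ₁₁⁻¹*κ₁₁⁻¹*κ₂₂⁻¹*κ₂₂⁻¹*κ₁₂*κ₁₂*κ₂₁*t*c*d - κ₁₁⁻¹*κ₁₁⁻¹*κ₂₂⁻¹*κ₂₂⁻¹*κ₂₂⁻¹*κ₂₂*κ₁₂*κ₁₂*κ₂₁*t*t*c*d - κ₁₁⁻¹*κ₁₁⁻¹*κ₂₂⁻¹*κ₂₂⁻¹*κ₂₂⁻¹*κ₂₂*κ₁₂*κ₁₂*κ₂₁*s*t*c*d + κ₁₁⁻¹*κ₁₁⁻¹*κ₂₂⁻¹*κ₂₂⁻¹*κ₂₂⁻¹*κ₂₂⁻¹*κ₂₂*κ₂₂*κ₁₂*κ₁₂*κ₂₁*s*t*t*c*d + α*κ₁₁⁻¹*κ₂₂⁻¹*κ₁₂*c - α*κ₁₁⁻¹*κ₂₂⁻¹*κ₂₂⁻¹*κ₂₂*κ₁₂*t*c + α*α⁻¹*κ₁₁⁻¹*κ₁₁⁻¹*κ₂₂⁻¹*κ₂₂⁻¹*κ₁₂*κ₁₂*κ₂₁*t*c*d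 - α*α⁻¹*κ₁₁⁻¹*κ₁₁⁻¹*κ₂₂⁻¹*κ₂₂⁻¹*κ₂₂⁻¹*κ₂₂*κ₁₂*κ₁₂*κ₂₁*t*t*c*d - α*α⁻¹*κ₁₁⁻¹*κ₁₁⁻¹*κ₂₂⁻¹*κ₂₂⁻¹*κ₂₂⁻¹*κ₂₂*κ₁₂*κ₁₂*κ₂₁*s*t*c*d + α*α⁻¹*κ₁₁⁻¹*κ₁₁⁻¹*κ₂₂⁻¹*κ₂₂⁻¹*κ₂₂⁻¹*κ₂₂⁻¹*κ₂₂*κ₂₂*κ₁₂*κ₁₂*κ₂₁*s*t*t*c*d) * hAI + (-κ₁₁⁻¹*κ₁₁⁻¹*κ₂₂⁻¹*κ₂₂⁻¹*κ₁₂*κ₁₂*κ₂₁*t*t*c*d - κ₁₁⁻¹*κ₁₁⁻¹*κ₂₂⁻¹*κ₂₂⁻¹*κ₁₂*κ₁₂*κ₂₁*s*t*c*d + κ₁₁⁻¹*κ₁₁⁻¹*κ₂₂⁻¹*κ₂₂⁻¹*κ₁₂*κ₁₂*κ₂₁*s*t*t*c*d + κ₁₁⁻¹*κ₁₁⁻¹*κ₂₂⁻¹*κ₂₂⁻¹*κ₂₂⁻¹*κ₂₂*κ₁₂*κ₁₂*κ₂₁*s*t*t*c*d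 - α*κ₁₁⁻¹*κ₂₂⁻¹*κ₁₂*t*c) * h22 + (κ₁₁⁻¹*κ₂₂⁻¹*κ₁₂*c - κ₁₁⁻¹*κ₂₂⁻¹*κ₁₂*t*c) * hαr + (-κ₁₁⁻¹*κ₂₂⁻¹*κ₁₂ - κ₁₁⁻¹*κ₁₁⁻¹*κ₂₂⁻¹*κ₂₂⁻¹*κ₁₂*κ₁₂*κ₂₁*s*c + κ₁₁⁻¹*κ₁₁⁻¹*κ₂₂⁻¹*κ₂₂⁻¹*κ₁₂*κ₁₂*κ₂₁*s*t*c) * hct + (κ₁₁⁻¹*κ₁₁⁻¹*κ₂₂⁻¹*κ₂₂⁻¹*κ₁₂*κ₁₂*κ₂₁*c - κ₁₁⁻¹*κ₁₁⁻¹*κ₂₂⁻¹*κ₂₂⁻¹*κ₁₂*κ₁₂*κ₂₁*t*c) * hR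
    · linear_combination (-κ₁₁⁻¹*κ₂₂⁻¹*κ₂₁*b + κ₁₁⁻¹*κ₁₁⁻¹*κ₂₂⁻¹*κ₂₂⁻¹*κ₁₂*κ₂₁*κ₂₁*s*c*d - κ₁₁⁻¹*κ₁₁⁻¹*κ₂₂⁻¹*κ₂₂⁻¹*κ₂₂⁻¹*κ₂₂*κ₁₂*κ₂₁*κ₂₁*s*t*c*d - κ₁₁⁻¹*κ₁₁⁻¹*κ₂₂⁻¹*κ₂₂⁻¹*κ₂₂⁻¹*κ₂₂*κ₁₂*κ₂₁*κ₂₁*s*s*c*d + κ₁₁⁻¹*κ₁₁⁻¹*κ₂₂⁻¹*κ₂₂⁻¹*κ₂₂⁻¹*κ₂₂⁻¹*κ₂₂*κ₂₂*κ₁₂*κ₂₁*κ₂₁*s*s*t*c*d + α*κ₁₁⁻¹*κ₂₂⁻¹*κ₂₁*d - α*κ₁₁⁻¹*κ₂₂⁻¹*κ₂₂⁻¹*κ₂₂*κ₂₁*s*d + α*α⁻¹*κ₁₁⁻¹*κ₁₁⁻¹*κ₂₂⁻¹*κ₂₂⁻¹*κ₁₂*κ₂₁*κ₂₁*s*c*d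 - α*α⁻¹*κ₁₁⁻¹*κ₁₁⁻¹*κ₂₂⁻¹*κ₂₂⁻¹*κ₂₂⁻¹*κ₂₂*κ₁₂*κ₂₁*κ₂₁*s*t*c*d - α*α⁻¹*κ₁₁⁻¹*κ₁₁⁻¹*κ₂₂⁻¹*κ₂₂⁻¹*κ₂₂⁻¹*κ₂₂*κ₁₂*κ₂₁*κ₂₁*s*s*c*d + α*α⁻¹*κ₁₁⁻¹*κ₁₁⁻¹*κ₂₂⁻¹*κ₂₂⁻¹*κ₂₂⁻¹*κ₂₂⁻¹*κ₂₂*κ₂₂*κ₁₂*κ₂₁*κ₂₁*s*s*t*c*d) * hAI + (-κ₁₁⁻¹*κ₁₁⁻¹*κ₂₂⁻¹*κ₂₂⁻¹*κ₁₂*κ₂₁*κ₂₁*s*t*c*d - κ₁₁⁻¹*κ₁₁⁻¹*κ₂₂⁻¹*κ₂₂⁻¹*κ₁₂*κ₂₁*κ₂₁*s*s*c*d + κ₁₁⁻¹*κ₁₁⁻¹*κ₂₂⁻¹*κ₂₂⁻¹*κ₁₂*κ₂₁*κ₂₁*s*s*t*c*d + κ₁₁⁻¹*κ₁₁⁻¹*κ₂₂⁻¹*κ₂₂⁻¹*κ₂₂⁻¹*κ₂₂*κ₁₂*κ₂₁*κ₂₁*s*s*t*c*d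 - α*κ₁₁⁻¹*κ₂₂⁻¹*κ₂₁*s*d) * h22 + (κ₁₁⁻¹*κ₂₂⁻¹*κ₂₁*d - κ₁₁⁻¹*κ₂₂⁻¹*κ₂₁*s*d) * hαr + (-κ₁₁⁻¹*κ₁₁⁻¹*κ₂₂⁻¹*κ₂₂⁻¹*κ₁₂*κ₂₁*κ₂₁*s*d + κ₁₁⁻¹*κ₁₁⁻¹*κ₂₂⁻¹*κ₂₂⁻¹*κ₁₂*κ₂₁*κ₂₁*s*s*d) * hct + (-κ₁₁⁻¹*κ₂₂⁻¹*κ₂₁) * hds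
    · linear_combination (-κ₁₁⁻¹*κ₁₁⁻¹*κ₂₂⁻¹*κ₁₂*κ₂₁*c*d + κ₁₁⁻¹*κ₁₁⁻¹*κ₂₂⁻¹*κ₁₂*κ₂₁*a*b + κ₁₁⁻¹*κ₁₁⁻¹*κ₂₂⁻¹*κ₂₂⁻¹*κ₂₂*κ₁₂*κ₂₁*t*c*d + κ₁₁⁻¹*κ₁₁⁻¹*κ₂₂⁻¹*κ₂₂⁻¹*κ₂₂*κ₁₂*κ₂₁*s*c*d - κ₁₁⁻¹*κ₁₁⁻¹*κ₂₂⁻¹*κ₂₂⁻¹*κ₂₂⁻¹*κ₂₂*κ₂₂*κ₁₂*κ₂₁*s*t*c*d - α*α⁻¹*κ₁₁⁻¹*κ₁₁⁻¹*κ₂₂⁻¹*κ₁₂*κ₂₁*c*d + α*α⁻¹*κ₁₁⁻¹*κ₁₁⁻¹*κ₂₂⁻¹*κ₂₂⁻¹*κ₂₂*κ₁₂*κ₂₁*t*c*d + α*α⁻¹*κ₁₁⁻¹*κ₁₁⁻¹*κ₂₂⁻¹*κ₂₂⁻¹*κ₂₂*κ₁₂*κ₂₁*s*c*d - α*α⁻¹*κ₁₁⁻¹*κ₁₁⁻¹*κ₂₂⁻¹*κ₂₂⁻¹*κ₂₂⁻¹*κ₂₂*κ₂₂*κ₁₂*κ₂₁*s*t*c*d)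 * hAI + (κ₁₁⁻¹*κ₁₁⁻¹*κ₂₂⁻¹*κ₁₂*κ₂₁*t*c*d + κ₁₁⁻¹*κ₁₁⁻¹*κ₂₂⁻¹*κ₁₂*κ₂₁*s*c*d - κ₁₁⁻¹*κ₁₁⁻¹*κ₂₂⁻¹*κ₁₂*κ₂₁*s*t*c*d - κ₁₁⁻¹*κ₁₁⁻¹*κ₂₂⁻¹*κ₂₂⁻¹*κ₂₂*κ₁₂*κ₂₁*s*t*c*d) * h22 + (κ₁₁⁻¹*κ₁₁⁻¹*κ₂₂⁻¹*κ₁₂*κ₂₁*b) * hct + (κ₁₁⁻¹*κ₁₁⁻¹*κ₂₂⁻¹*κ₁₂*κ₂₁*c - κ₁₁⁻¹*κ₁₁⁻¹*κ₂₂⁻¹*κ₁₂*κ₂₁*t*c) * hds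
end

section
/- Let K be a real 1×m matrix (row vector), ξ₁, ξ₂ ∈ ℝ^m with K ξ₁ ≠ 0 and K ξ₂ ≠ 0, and set ξ̂_i = ξ_i/(K ξ_i). Let p₁,p₂,q₁,q₂ be real numbers with p₁ ≠ p₂ and p₁ ≠ q₂. Define u_{1,in} = ((p₁−q₂) ξ̂₁ + (q₂−p₂) ξ̂₂)/(p₁−p₂), u_{2,in} = ξ̂₂, u_{1,out} = ξ̂₁, u_{2,out} = ((p₁−q₁) ξ̂₁ + (q₁−p₂) ξ̂₂)/(p₁−p₂). Then (u_{1,out}, u_{2,out}) = (u_{1,in}, u_{2,in}) · R(p₁,q₁;p₂,q₂), where R(p₁,q₁;p₂,q₂) is the 2×2 matrix with rows ((p₁−p₂)/(p₁−q₂), (p₁−q₁)/(p₁−q₂)) and ((p₂−q₂)/(p₁−q₂), (q₁−q₂)/(p₁−q₂)), i.e. u_{1,out} = ((p₁−p₂) u_{1,in} + (p₂−q₂) u_{2,in})/(p₁−q₂) and u_{2,out} = ((p₁−q₁) u_{1,in} + (q₁−q₂) u_{2,in})/(p₁−q₂). -/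
open Matrix

/-- Pure column vector 2-soliton solutions: the outgoing polarizations are obtained from
the incoming ones by right multiplication with the R-matrix `R(p₁,q₁;p₂,q₂)`. -/
theorem stmt_11 {m : ℕ} (K : Fin m → ℝ) (ξ₁ ξ₂ : Fin m → ℝ)
    (hK1 : K ⬝ᵥ ξ₁ ≠ 0) (hK2 : K ⬝ᵥ ξ₂ ≠ 0)
    (ξhat₁ ξhat₂ : Fin m → ℝ)
    (hξhat₁ : ξhat₁ = (K ⬝ᵥ ξ₁)⁻¹ • ξ₁) (hξhat₂ : ξhat₂ = (K ⬝ᵥ ξ₂)⁻¹ • ξ₂)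
    (p₁ p₂ q₁ q₂ : ℝ) (h5 : p₁ ≠ p₂) (h6 : p₁ ≠ q₂)
    (u₁in u₂in u₁out u₂out : Fin m → ℝ)
    (hu₁in : u₁in = (p₁ - p₂)⁻¹ • ((p₁ - q₂) • ξhat₁ + (q₂ - p₂) • ξhat₂))
    (hu₂in : u₂in = ξhat₂)
    (hu₁out : u₁out = ξhat₁)
    (hu₂out : u₂out = (p₁ - p₂)⁻¹ • ((p₁ - q₁) • ξhat₁ + (q₁ - p₂) • ξhat₂)) :
    u₁out = (p₁ - q₂)⁻¹ • ((p₁ - p₂) • u₁in + (p₂ - q₂) • u₂in) ∧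
    u₂out = (p₁ - q₂)⁻¹ • ((p₁ - q₁) • u₁in + (q₁ - q₂) • u₂in) := by
  have hp : p₁ - p₂ ≠ 0 := sub_ne_zero.mpr h5
  have hq : p₁ - q₂ ≠ 0 := sub_ne_zero.mpr h6
  subst hu₁in hu₂in hu₁out hu₂out
  constructor <;> funext i <;>
    simp only [Pi.smul_apply, Pi.add_apply, smul_eq_mul] <;>
    field_simp <;> ring
end

section
/- (Yang-Baxter equation for the vector KP R-matrix.) For real parameters p₁,p₂,p₃,q₁,q₂,q₃ with p_i ≠ q_j whenever i < j, define for i < j the 3×3 real matrix r_{ij} which equals the identity except that its entries at positions (i,i), (i,j), (j,i), (j,j) are, respectively, (p_i−p_j)/(p_i−q_j), (p_i−q_i)/(p_i−q_j), (p_j−q_j)/(p_i−q_j), (q_i−q_j)/(p_i−q_j). Then r_{12} r_{13} r_{23} = r_{23} r_{13} r_{12}. -/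
open Matrix

/-- The embedding of the 2×2 R-matrix `R(p_i,q_i;p_j,q_j)` into the 3×3 identity at rows
and columns `1,2` (positions `12`). -/
noncomputable def r12 (p₁ q₁ p₂ q₂ : ℝ) : Matrix (Fin 3) (Fin 3) ℝ :=
  !![(p₁ - p₂) / (p₁ - q₂), (p₁ - q₁) / (p₁ - q₂), 0;
     (p₂ - q₂) / (p₁ - q₂), (q₁ - q₂) / (p₁ - q₂), 0;
     0, 0, 1]

/-- The embedding at positions `13`. -/
noncomputable def r13 (p₁ q₁ p₃ q₃ : ℝ) : Matrix (Fin 3) (Fin 3) ℝ :=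
  !![(p₁ - p₃) / (p₁ - q₃), 0, (p₁ - q₁) / (p₁ - q₃);
     0, 1, 0;
     (p₃ - q₃) / (p₁ - q₃), 0, (q₁ - q₃) / (p₁ - q₃)]

/-- The embedding at positions `23`. -/
noncomputable def r23 (p₂ q₂ p₃ q₃ : ℝ) : Matrix (Fin 3) (Fin 3) ℝ :=
  !![1, 0, 0;
     0, (p₂ - p₃) / (p₂ - q₃), (p₂ - q₂) / (p₂ - q₃);
     0, (p₃ - q₃) / (p₂ - q₃), (q₂ - q₃) / (p₂ - q₃)]

/-- Yang–Baxter equation for the vector KP R-matrix. -/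
theorem stmt_12 (p₁ p₂ p₃ q₁ q₂ q₃ : ℝ)
    (h12 : p₁ ≠ q₂) (h13 : p₁ ≠ q₃) (h23 : p₂ ≠ q₃) :
    r12 p₁ q₁ p₂ q₂ * r13 p₁ q₁ p₃ q₃ * r23 p₂ q₂ p₃ q₃
      = r23 p₂ q₂ p₃ q₃ * r13 p₁ q₁ p₃ q₃ * r12 p₁ q₁ p₂ q₂ := by
  ext i j
  fin_cases i <;> fin_cases j <;>
  · simp only [r12, r13, r23, mul_apply, Fin.sum_univ_three, of_apply, cons_val_zero, cons_val_one,
      cons_val_two, head_cons, tail_cons, Fin.reduceFinMk]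
    field_simp
    ring
end

section
/- (Row-vector KP R-matrix.) For real numbers p_i,q_i,p_j,q_j with p_j ≠ q_i and p_i ≠ q_j, define R̃(p_i,q_i;p_j,q_j) as the 2×2 matrix with rows ((q_j−q_i)/(p_j−q_i), (p_j−q_j)/(p_j−q_i)) and ((p_i−q_i)/(p_j−q_i), (p_j−p_i)/(p_j−q_i)), and let R(p_i,q_i;p_j,q_j) be the 2×2 matrix with rows ((p_i−p_j)/(p_i−q_j), (p_i−q_i)/(p_i−q_j)) and ((p_j−q_j)/(p_i−q_j), (q_i−q_j)/(p_i−q_j)). Then R̃(p_i,q_i;p_j,q_j) = R(q_i,p_i;q_j,p_j)ᵀ. Moreover, for parameters p₁,p₂,p₃,q₁,q₂,q₃ with p_j ≠ q_i for all i < j, the 3×3 matrices r̃_{ij} obtained by embedding R̃(p_i,q_i;p_j,q_j) into the identity at rows and columns i,j satisfy the Yang-Baxter equation r̃_{12} r̃_{13} r̃_{23} = r̃_{23} r̃_{13} r̃_{12}. -/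
open Matrix

/-- The vector KP R-matrix `R(p_i,q_i;p_j,q_j)`. -/
noncomputable def Rmat (pi qi pj qj : ℝ) : Matrix (Fin 2) (Fin 2) ℝ :=
  !![(pi - pj) / (pi - qj), (pi - qi) / (pi - qj);
     (pj - qj) / (pi - qj), (qi - qj) / (pi - qj)]

/-- The row-vector KP R-matrix `R̃(p_i,q_i;p_j,q_j)`. -/
noncomputable def Rtilde (pi qi pj qj : ℝ) : Matrix (Fin 2) (Fin 2) ℝ :=
  !![(qj - qi) / (pj - qi), (pj - qj) / (pj - qi);
     (pi - qi) / (pj - qi), (pj - pi) / (pj - qi)]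

/-- Embedding of a 2×2 matrix into the 3×3 identity at rows/columns `1,2`. -/
noncomputable def emb12 (B : Matrix (Fin 2) (Fin 2) ℝ) : Matrix (Fin 3) (Fin 3) ℝ :=
  !![B 0 0, B 0 1, 0; B 1 0, B 1 1, 0; 0, 0, 1]

/-- Embedding of a 2×2 matrix into the 3×3 identity at rows/columns `1,3`. -/
noncomputable def emb13 (B : Matrix (Fin 2) (Fin 2) ℝ) : Matrix (Fin 3) (Fin 3) ℝ :=
  !![B 0 0, 0, B 0 1; 0, 1, 0; B 1 0, 0, B 1 1]

/-- Embedding of a 2×2 matrix into the 3×3 identity at rows/columns `2,3`. -/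
noncomputable def emb23 (B : Matrix (Fin 2) (Fin 2) ℝ) : Matrix (Fin 3) (Fin 3) ℝ :=
  !![1, 0, 0; 0, B 0 0, B 0 1; 0, B 1 0, B 1 1]

theorem Rtilde_eq_transpose_Rmat (pi qi pj qj : ℝ) :
    Rtilde pi qi pj qj = (Rmat qi pi qj pj)ᵀ := by
  ext i j
  fin_cases i <;> fin_cases j <;> simp [Rtilde, Rmat] <;>
    rw [← neg_div_neg_eq, neg_sub, neg_sub]

theorem emb12_mul_emb13_mul_emb23 (B C D : Matrix (Fin 2) (Fin 2) ℝ) :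
    emb12 B * emb13 C * emb23 D =
      !![B 0 0 * C 0 0, B 0 1 * D 0 0 + B 0 0 * C 0 1 * D 1 0,
          B 0 1 * D 0 1 + B 0 0 * C 0 1 * D 1 1;
        B 1 0 * C 0 0, B 1 1 * D 0 0 + B 1 0 * C 0 1 * D 1 0,
          B 1 1 * D 0 1 + B 1 0 * C 0 1 * D 1 1;
        C 1 0, C 1 1 * D 1 0, C 1 1 * D 1 1] := by
  simp [emb12, emb13, emb23, mul_assoc]

theorem emb23_mul_emb13_mul_emb12 (B C D : Matrix (Fin 2) (Fin 2) ℝ) :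
    emb23 D * emb13 C * emb12 B =
      !![C 0 0 * B 0 0, C 0 0 * B 0 1, C 0 1;
        D 0 1 * C 1 0 * B 0 0 + D 0 0 * B 1 0, D 0 1 * C 1 0 * B 0 1 + D 0 0 * B 1 1,
          D 0 1 * C 1 1;
        D 1 1 * C 1 0 * B 0 0 + D 1 0 * B 1 0, D 1 1 * C 1 0 * B 0 1 + D 1 0 * B 1 1,
          D 1 1 * C 1 1] := by
  simp [emb12, emb13, emb23, mul_assoc]

theorem Rtilde_yangBaxter {p₁ p₂ p₃ q₁ q₂ q₃ : ℝ}
    (h12 : p₂ ≠ q₁) (h13 : p₃ ≠ q₁) (h23 : p₃ ≠ q₂) :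
    emb12 (Rtilde p₁ q₁ p₂ q₂) * emb13 (Rtilde p₁ q₁ p₃ q₃) * emb23 (Rtilde p₂ q₂ p₃ q₃)
      = emb23 (Rtilde p₂ q₂ p₃ q₃) * emb13 (Rtilde p₁ q₁ p₃ q₃)
        * emb12 (Rtilde p₁ q₁ p₂ q₂) := by
  have d12 : p₂ - q₁ ≠ 0 := sub_ne_zero.mpr h12
  have d13 : p₃ - q₁ ≠ 0 := sub_ne_zero.mpr h13
  have d23 : p₃ - q₂ ≠ 0 := sub_ne_zero.mpr h23
  rw [emb12_mul_emb13_mul_emb23, emb23_mul_emb13_mul_emb12]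
  ext i j
  fin_cases i <;> fin_cases j <;> simp [Rtilde] <;> field_simp <;> ring

theorem stmt_13_general (pi qi pj qj : ℝ)
    (p₁ p₂ p₃ q₁ q₂ q₃ : ℝ)
    (h12 : p₂ ≠ q₁) (h13 : p₃ ≠ q₁) (h23 : p₃ ≠ q₂) :
    Rtilde pi qi pj qj = (Rmat qi pi qj pj)ᵀ ∧
    emb12 (Rtilde p₁ q₁ p₂ q₂) * emb13 (Rtilde p₁ q₁ p₃ q₃) * emb23 (Rtilde p₂ q₂ p₃ q₃)
      = emb23 (Rtilde p₂ q₂ p₃ q₃) * emb13 (Rtilde p₁ q₁ p₃ q₃)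
        * emb12 (Rtilde p₁ q₁ p₂ q₂) :=
  ⟨Rtilde_eq_transpose_Rmat pi qi pj qj, Rtilde_yangBaxter h12 h13 h23⟩

/-- `R̃(p_i,q_i;p_j,q_j) = R(q_i,p_i;q_j,p_j)ᵀ`, and the Yang–Baxter equation for the
row-vector KP R-matrix. -/
theorem stmt_13 (pi qi pj qj : ℝ) (hij : pj ≠ qi) (hji : pi ≠ qj)
    (p₁ p₂ p₃ q₁ q₂ q₃ : ℝ)
    (h12 : p₂ ≠ q₁) (h13 : p₃ ≠ q₁) (h23 : p₃ ≠ q₂) :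
    Rtilde pi qi pj qj = (Rmat qi pi qj pj)ᵀ ∧
    emb12 (Rtilde p₁ q₁ p₂ q₂) * emb13 (Rtilde p₁ q₁ p₃ q₃) * emb23 (Rtilde p₂ q₂ p₃ q₃)
      = emb23 (Rtilde p₂ q₂ p₃ q₃) * emb13 (Rtilde p₁ q₁ p₃ q₃)
        * emb12 (Rtilde p₁ q₁ p₂ q₂) :=
  stmt_13_general pi qi pj qj p₁ p₂ p₃ q₁ q₂ q₃ h12 h13 h23
end

section
/- (Crossing lemma, two-soliton vector case.) Let K be a real 1×m matrix (so n = 1), ξ₁, ξ₂ ∈ ℝ^m, η₁, η₂ nonzero real numbers, and p₁,p₂,q₁,q₂ real numbers with p₁≠q₁, p₂≠q₂, q₁≠p₂, q₂≠p₁. Set κ_{ij} = η_i (K ξ_j) (a scalar), assume κ_{11}, κ_{22} ≠ 0 and α := 1 − ((q₁−p₁)(q₂−p₂)κ_{12}κ_{21})/((q₁−p₂)(q₂−p₁)κ_{11}κ_{22}) ≠ 0. Define the vectors φ_{11} = ((q₁−p₁)(q₂−p₂)/(α κ_{11} κ_{22})) ( (κ_{22}/(p₂−q₂)) η₁ ξ₁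 + (κ_{11}/(p₁−q₁)) η₂ ξ₂ + (κ_{12}/(q₁−p₂)) η₂ ξ₁ + (κ_{21}/(q₂−p₁)) η₁ ξ₂ ), φ_{12} = (p₁−q₁) η₁ ξ₁/κ_{11}, φ_{21} = (p₂−q₂) η₂ ξ₂/κ_{22}, φ_{22} = 0 ∈ ℝ^m. Then (p₁−p₂) φ_{11} + (q₁−q₂) φ_{22} = (p₁−q₂) φ_{12} + (q₁−p₂) φ_{21}. -/
/-! For `n = 1` the numbers `κᵢⱼ = ηᵢ (K ξⱼ)` form a rank-one matrix, so `κ₁₂ κ₂₁ = κ₁₁ κ₂₂` and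
`α = (p₂ - p₁)(q₁ - q₂) / ((q₁ - p₂)(q₂ - p₁))` depends on the spectral parameters alone; in
particular `α ≠ 0` forces `p₁ ≠ p₂` and `q₁ ≠ q₂`. With this value of `α` both sides of the crossing
identity are combinations of `ξ₁` and `ξ₂`, and their coefficients agree by a rational-function
identity. -/

theorem one_sub_crossing_ratio_eq {𝕜 : Type*} [Field 𝕜] {p₁ p₂ q₁ q₂ κ₁₁ κ₁₂ κ₂₁ κ₂₂ : 𝕜}
    (hκ : κ₁₂ * κ₂₁ = κ₁₁ * κ₂₂) (hκ₁₁ : κ₁₁ ≠ 0) (hκ₂₂ : κ₂₂ ≠ 0)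
    (h₃ : q₁ ≠ p₂) (h₄ : q₂ ≠ p₁) :
    1 - ((q₁ - p₁) * (q₂ - p₂) * κ₁₂ * κ₂₁) / ((q₁ - p₂) * (q₂ - p₁) * κ₁₁ * κ₂₂)
      = (p₂ - p₁) * (q₁ - q₂) / ((q₁ - p₂) * (q₂ - p₁)) := by
  have h₃' : q₁ - p₂ ≠ 0 := sub_ne_zero.mpr h₃
  have h₄' : q₂ - p₁ ≠ 0 := sub_ne_zero.mpr h₄
  rw [mul_assoc _ κ₁₂, hκ]
  field_simp
  ring

theorem crossing_identity {𝕜 V : Type*} [Field 𝕜] [AddCommGroup V] [Module 𝕜 V] (ξ₁ ξ₂ : V)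
    {η₁ η₂ a b p₁ p₂ q₁ q₂ : 𝕜} (ha : η₁ * a ≠ 0) (hb : η₂ * b ≠ 0)
    (h₁ : p₁ ≠ q₁) (h₂ : p₂ ≠ q₂) (h₃ : q₁ ≠ p₂) (h₄ : q₂ ≠ p₁) (hp : p₁ ≠ p₂) (hq : q₁ ≠ q₂) :
    (p₁ - p₂) • (((q₁ - p₁) * (q₂ - p₂)
        / ((p₂ - p₁) * (q₁ - q₂) / ((q₁ - p₂) * (q₂ - p₁)) * (η₁ * a) * (η₂ * b))) •
      (((η₂ * b) / (p₂ - q₂)) • (η₁ • ξ₁) + ((η₁ * a) / (p₁ - q₁)) • (η₂ • ξ₂)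
        + ((η₁ * b) / (q₁ - p₂)) • (η₂ • ξ₁) + ((η₂ * a) / (q₂ - p₁)) • (η₁ • ξ₂)))
      = (p₁ - q₂) • (((p₁ - q₁) / (η₁ * a)) • (η₁ • ξ₁))
        + (q₁ - p₂) • (((p₂ - q₂) / (η₂ * b)) • (η₂ • ξ₂)) := by
  have h₁' : p₁ - q₁ ≠ 0 := sub_ne_zero.mpr h₁
  have h₂' : p₂ - q₂ ≠ 0 := sub_ne_zero.mpr h₂
  have h₃' : q₁ - p₂ ≠ 0 := sub_ne_zero.mpr h₃
  have h₄' : q₂ - p₁ ≠ 0 := sub_ne_zero.mpr h₄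
  have hp' : p₂ - p₁ ≠ 0 := sub_ne_zero.mpr hp.symm
  have hq' : q₁ - q₂ ≠ 0 := sub_ne_zero.mpr hq
  have hη₁ := left_ne_zero_of_mul ha
  have ha' := right_ne_zero_of_mul ha
  have hη₂ := left_ne_zero_of_mul hb
  have hb' := right_ne_zero_of_mul hb
  match_scalars <;> field_simp <;> ring

theorem stmt_14_general {m : ℕ} (K : Fin m → ℝ) (ξ₁ ξ₂ : Fin m → ℝ) (η₁ η₂ : ℝ)
    (p₁ p₂ q₁ q₂ : ℝ)
    (h1 : p₁ ≠ q₁) (h2 : p₂ ≠ q₂) (h3 : q₁ ≠ p₂) (h4 : q₂ ≠ p₁)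
    (κ₁₁ κ₁₂ κ₂₁ κ₂₂ : ℝ)
    (hκ₁₁ : κ₁₁ = η₁ * (K ⬝ᵥ ξ₁)) (hκ₁₂ : κ₁₂ = η₁ * (K ⬝ᵥ ξ₂))
    (hκ₂₁ : κ₂₁ = η₂ * (K ⬝ᵥ ξ₁)) (hκ₂₂ : κ₂₂ = η₂ * (K ⬝ᵥ ξ₂))
    (hκ11 : κ₁₁ ≠ 0) (hκ22 : κ₂₂ ≠ 0)
    (α : ℝ)
    (hα : α = 1 - ((q₁ - p₁) * (q₂ - p₂) * κ₁₂ * κ₂₁)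
      / ((q₁ - p₂) * (q₂ - p₁) * κ₁₁ * κ₂₂))
    (hα0 : α ≠ 0)
    (φ₁₁ φ₁₂ φ₂₁ φ₂₂ : Fin m → ℝ)
    (hφ₁₁ : φ₁₁ = ((q₁ - p₁) * (q₂ - p₂) / (α * κ₁₁ * κ₂₂)) •
      ((κ₂₂ / (p₂ - q₂)) • (η₁ • ξ₁) + (κ₁₁ / (p₁ - q₁)) • (η₂ • ξ₂)
        + (κ₁₂ / (q₁ - p₂)) • (η₂ • ξ₁) + (κ₂₁ / (q₂ - p₁)) • (η₁ • ξ₂)))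
    (hφ₁₂ : φ₁₂ = ((p₁ - q₁) / κ₁₁) • (η₁ • ξ₁))
    (hφ₂₁ : φ₂₁ = ((p₂ - q₂) / κ₂₂) • (η₂ • ξ₂))
    (hφ₂₂ : φ₂₂ = 0) :
    (p₁ - p₂) • φ₁₁ + (q₁ - q₂) • φ₂₂ = (p₁ - q₂) • φ₁₂ + (q₁ - p₂) • φ₂₁ := by
  have hκ : κ₁₂ * κ₂₁ = κ₁₁ * κ₂₂ := by rw [hκ₁₁, hκ₁₂, hκ₂₁, hκ₂₂]; ring
  rw [one_sub_crossing_ratio_eq hκ hκ11 hκ22 h3 h4] at hα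
  have hp : p₁ ≠ p₂ := fun h ↦ hα0 (by simp [hα, h])
  have hq : q₁ ≠ q₂ := fun h ↦ hα0 (by simp [hα, h])
  subst hα hφ₁₁ hφ₁₂ hφ₂₁ hφ₂₂ hκ₁₁ hκ₁₂ hκ₂₁ hκ₂₂
  simpa using crossing_identity ξ₁ ξ₂ hκ11 hκ22 h1 h2 h3 h4 hp hq

/-- Crossing lemma for the two-soliton vector case (`n = 1`):
`(p₁−p₂) φ₁₁ + (q₁−q₂) φ₂₂ = (p₁−q₂) φ₁₂ + (q₁−p₂) φ₂₁`. -/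
theorem stmt_14 {m : ℕ} (K : Fin m → ℝ) (ξ₁ ξ₂ : Fin m → ℝ) (η₁ η₂ : ℝ)
    (hη₁ : η₁ ≠ 0) (hη₂ : η₂ ≠ 0)
    (p₁ p₂ q₁ q₂ : ℝ)
    (h1 : p₁ ≠ q₁) (h2 : p₂ ≠ q₂) (h3 : q₁ ≠ p₂) (h4 : q₂ ≠ p₁)
    (κ₁₁ κ₁₂ κ₂₁ κ₂₂ : ℝ)
    (hκ₁₁ : κ₁₁ = η₁ * (K ⬝ᵥ ξ₁)) (hκ₁₂ : κ₁₂ = η₁ * (K ⬝ᵥ ξ₂))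
    (hκ₂₁ : κ₂₁ = η₂ * (K ⬝ᵥ ξ₁)) (hκ₂₂ : κ₂₂ = η₂ * (K ⬝ᵥ ξ₂))
    (hκ11 : κ₁₁ ≠ 0) (hκ22 : κ₂₂ ≠ 0)
    (α : ℝ)
    (hα : α = 1 - ((q₁ - p₁) * (q₂ - p₂) * κ₁₂ * κ₂₁)
      / ((q₁ - p₂) * (q₂ - p₁) * κ₁₁ * κ₂₂))
    (hα0 : α ≠ 0)
    (φ₁₁ φ₁₂ φ₂₁ φ₂₂ : Fin m → ℝ)
    (hφ₁₁ : φ₁₁ = ((q₁ - p₁) * (q₂ - p₂) / (α * κ₁₁ * κ₂₂)) •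
      ((κ₂₂ / (p₂ - q₂)) • (η₁ • ξ₁) + (κ₁₁ / (p₁ - q₁)) • (η₂ • ξ₂)
        + (κ₁₂ / (q₁ - p₂)) • (η₂ • ξ₁) + (κ₂₁ / (q₂ - p₁)) • (η₁ • ξ₂)))
    (hφ₁₂ : φ₁₂ = ((p₁ - q₁) / κ₁₁) • (η₁ • ξ₁))
    (hφ₂₁ : φ₂₁ = ((p₂ - q₂) / κ₂₂) • (η₂ • ξ₂))
    (hφ₂₂ : φ₂₂ = 0) :
    (p₁ - p₂) • φ₁₁ + (q₁ - q₂) • φ₂₂ = (p₁ - q₂) • φ₁₂ + (q₁ - p₂) • φ₂₁ :=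
  stmt_14_general K ξ₁ ξ₂ η₁ η₂ p₁ p₂ q₁ q₂ h1 h2 h3 h4 κ₁₁ κ₁₂ κ₂₁ κ₂₂ hκ₁₁ hκ₁₂ hκ₂₁ hκ₂₂ hκ11
    hκ22 α hα hα0 φ₁₁ φ₁₂ φ₂₁ φ₂₂ hφ₁₁ hφ₁₂ hφ₂₁ hφ₂₂
end

section
/- (Theorem: R-matrix relation at a crossing.) Let p₁,q₁,p₂,q₂ be real numbers with p₁≠q₁, p₂≠q₂, p₁≠q₂, and let φ_{11}, φ_{12}, φ_{21}, φ_{22} ∈ ℝ^m be vectors satisfying (p₁−p₂) φ_{11} + (q₁−q₂) φ_{22} = (p₁−q₂) φ_{12} + (q₁−p₂) φ_{21}. Define û_{11,21} = (φ_{11}−φ_{21})/(p₁−q₁), û_{21,22} = (φ_{21}−φ_{22})/(p₂−q₂), û_{12,22} = (φ_{12}−φ_{22})/(p₁−q₁), û_{11,12} = (φ_{11}−φ_{12})/(p₂−q₂). Then ((p₁−p₂)/(p₁−q₂)) û_{11,21} + ((p₂−q₂)/(p₁−q₂)) û_{21,22} = û_{12,22} and ((p₁−q₁)/(p₁−q₂))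 û_{11,21} + ((q₁−q₂)/(p₁−q₂)) û_{21,22} = û_{11,12}; that is, the pair (û_{11,21}, û_{21,22}) is mapped to (û_{12,22}, û_{11,12}) by right multiplication with the 2×2 R-matrix R(p₁,q₁;p₂,q₂) with rows ((p₁−p₂)/(p₁−q₂), (p₁−q₁)/(p₁−q₂)) and ((p₂−q₂)/(p₁−q₂), (q₁−q₂)/(p₁−q₂)). -/
/-!
Multiplying the first identity by `(p₁ - q₁)(p₁ - q₂)` and the second by `(p₂ - q₂)(p₁ - q₂)`
turns each of them into the crossing relation (up to sign).
-/

section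
variable {K V : Type*} [Field K] [AddCommGroup V] [Module K V]
  {p₁ q₁ p₂ q₂ : K} {φ₁₁ φ₁₂ φ₂₁ φ₂₂ : V}

theorem rMatrix_apply_fst_of_crossing (h1 : p₁ ≠ q₁) (h2 : p₂ ≠ q₂) (h3 : p₁ ≠ q₂)
    (hcross : (p₁ - p₂) • φ₁₁ + (q₁ - q₂) • φ₂₂ = (p₁ - q₂) • φ₁₂ + (q₁ - p₂) • φ₂₁) :
    ((p₁ - p₂) / (p₁ - q₂)) • (p₁ - q₁)⁻¹ • (φ₁₁ - φ₂₁)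
      + ((p₂ - q₂) / (p₁ - q₂)) • (p₂ - q₂)⁻¹ • (φ₂₁ - φ₂₂) = (p₁ - q₁)⁻¹ • (φ₁₂ - φ₂₂) := by
  linear_combination (norm := skip) ((p₁ - q₁) * (p₁ - q₂))⁻¹ • hcross
  match_scalars <;> field_simp <;> ring

theorem rMatrix_apply_snd_of_crossing (h1 : p₁ ≠ q₁) (h2 : p₂ ≠ q₂) (h3 : p₁ ≠ q₂)
    (hcross : (p₁ - p₂) • φ₁₁ + (q₁ - q₂) • φ₂₂ = (p₁ - q₂) • φ₁₂ + (q₁ - p₂) • φ₂₁) :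
    ((p₁ - q₁) / (p₁ - q₂)) • (p₁ - q₁)⁻¹ • (φ₁₁ - φ₂₁)
      + ((q₁ - q₂) / (p₁ - q₂)) • (p₂ - q₂)⁻¹ • (φ₂₁ - φ₂₂) = (p₂ - q₂)⁻¹ • (φ₁₁ - φ₁₂) := by
  linear_combination (norm := skip) (-((p₂ - q₂) * (p₁ - q₂))⁻¹) • hcross
  match_scalars <;> field_simp <;> ring

end

/-- R-matrix relation at a crossing: the normalized polarizations
`(û_{11,21}, û_{21,22})` are mapped to `(û_{12,22}, û_{11,12})` by right multiplication
with the R-matrix `R(p₁,q₁;p₂,q₂)`. -/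
theorem stmt_15 {m : ℕ} (p₁ q₁ p₂ q₂ : ℝ)
    (h1 : p₁ ≠ q₁) (h2 : p₂ ≠ q₂) (h3 : p₁ ≠ q₂)
    (φ₁₁ φ₁₂ φ₂₁ φ₂₂ : Fin m → ℝ)
    (hcross : (p₁ - p₂) • φ₁₁ + (q₁ - q₂) • φ₂₂ = (p₁ - q₂) • φ₁₂ + (q₁ - p₂) • φ₂₁)
    (u1121 u2122 u1222 u1112 : Fin m → ℝ)
    (hu1121 : u1121 = (p₁ - q₁)⁻¹ • (φ₁₁ - φ₂₁))
    (hu2122 : u2122 = (p₂ - q₂)⁻¹ • (φ₂₁ - φ₂₂))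
    (hu1222 : u1222 = (p₁ - q₁)⁻¹ • (φ₁₂ - φ₂₂))
    (hu1112 : u1112 = (p₂ - q₂)⁻¹ • (φ₁₁ - φ₁₂)) :
    ((p₁ - p₂) / (p₁ - q₂)) • u1121 + ((p₂ - q₂) / (p₁ - q₂)) • u2122 = u1222 ∧
    ((p₁ - q₁) / (p₁ - q₂)) • u1121 + ((q₁ - q₂) / (p₁ - q₂)) • u2122 = u1112 := by
  subst hu1121 hu2122 hu1222 hu1112
  exact ⟨rMatrix_apply_fst_of_crossing h1 h2 h3 hcross,
    rMatrix_apply_snd_of_crossing h1 h2 h3 hcross⟩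
end

section
/- (Local Yang-Baxter equation for the one-parameter R-matrix.) For a real number x define R(x) as the 2×2 matrix with rows (x, 1+x) and (1−x, −x), and for i < j in {1,2,3} let R_{ij}(x) be the 3×3 matrix equal to the identity except that R(x) is embedded at rows and columns i,j. Let x, y, z be real numbers with x + z − xyz ≠ 0 and set X = xy/(x+z−xyz), Y = x+z−xyz, Z = yz/(x+z−xyz). Then R_{12}(x) R_{13}(y) R_{23}(z) = R_{23}(Z) R_{13}(Y) R_{12}(X). -/
open Matrix

/-- Embedding of the one-parameter R-matrix `R(x) = !![x, 1+x; 1−x, −x]` into the 3×3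
identity at rows/columns `1,2`. -/
def R12 (x : ℝ) : Matrix (Fin 3) (Fin 3) ℝ :=
  !![x, 1 + x, 0; 1 - x, -x, 0; 0, 0, 1]

/-- Embedding at rows/columns `1,3`. -/
def R13 (x : ℝ) : Matrix (Fin 3) (Fin 3) ℝ :=
  !![x, 0, 1 + x; 0, 1, 0; 1 - x, 0, -x]

/-- Embedding at rows/columns `2,3`. -/
def R23 (x : ℝ) : Matrix (Fin 3) (Fin 3) ℝ :=
  !![1, 0, 0; 0, x, 1 + x; 0, 1 - x, -x]

theorem R12_mul_R13_mul_R23 (x y z : ℝ) :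
    R12 x * R13 y * R23 z =
      !![x * y, (1 + x) * z + x * (1 + y) * (1 - z), (1 + x) * (1 + z) - x * (1 + y) * z;
        (1 - x) * y, -x * z + (1 - x) * (1 + y) * (1 - z), -x * (1 + z) - (1 - x) * (1 + y) * z;
        1 - y, -y * (1 - z), y * z] := by
  ext i j
  fin_cases i <;> fin_cases j <;> simp [R12, R13, R23, mul_apply, Fin.sum_univ_three] <;> ring

theorem R23_mul_R13_mul_R12 (X Y Z : ℝ) :
    R23 Z * R13 Y * R12 X =
      !![Y * X, Y * (1 + X), 1 + Y;
        (1 + Z) * (1 - Y) * X + Z * (1 - X), (1 + Z) * (1 - Y) * (1 + X) - Z * X, -(1 + Z) * Y;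
        -Z * (1 - Y) * X + (1 - Z) * (1 - X), -Z * (1 - Y) * (1 + X) - (1 - Z) * X, Z * Y] := by
  ext i j
  fin_cases i <;> fin_cases j <;> simp [R12, R13, R23, mul_apply, Fin.sum_univ_three] <;> ring

/-- Local Yang–Baxter equation for the one-parameter R-matrix, with
`X = xy/(x+z−xyz)`, `Y = x+z−xyz`, `Z = yz/(x+z−xyz)`. -/
theorem stmt_18 (x y z : ℝ) (h : x + z - x * y * z ≠ 0)
    (X Y Z : ℝ)
    (hX : X = x * y / (x + z - x * y * z))
    (hY : Y = x + z - x * y * z)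
    (hZ : Z = y * z / (x + z - x * y * z)) :
    R12 x * R13 y * R23 z = R23 Z * R13 Y * R12 X := by
  rw [R12_mul_R13_mul_R23, R23_mul_R13_mul_R12]
  -- with the denominators written as `Y`, `field_simp` can clear them
  rw [← hY] at h hX hZ
  subst hX hZ
  ext i j
  fin_cases i <;> fin_cases j <;> simp <;> field_simp <;> subst hY <;> ring
end
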